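/- arXiv:1505.03618 — 8 statements merged into one kernel-verified Lean document; each statement's English description precedes it below -/
import Mathlib

section
/- Let q be a prime power, s ≥ 1 an integer, and e_1, …, e_s distinct non-negative integers. Then the number S_{e_1,…,e_s}(q) of dynamical-equivalence classes among the maps F_q → F_q of the form x ↦ a_1 x^{e_1} + … + a_s x^{e_s} with a_1, …, a_s ∈ F_q^* satisfies S_{e_1,…,e_s}(q) ≤ (q−1)^{s−1} · gcd(e_1−1, …, e_s−1, q−1). -/
/-- Two self-maps `f g : α → α` are dynamically equivalent if there is a bijection
`σ : α → α` with `σ⁻¹ ∘ g ∘ σ = f`. -/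
def DynEquiv {α : Type*} (f g : α → α) : Prop :=
  ∃ σ : Equiv.Perm α, ∀ x, σ.symm (g (σ x)) = f x

/-- The number of dynamical-equivalence classes represented by the elements of a set `S`
of self-maps. -/
noncomputable def numDynClasses {α : Type*} (S : Set (α → α)) : ℕ :=
  Nat.card (Quot (fun f g : S => DynEquiv f.1 g.1))

/-!
Conjugating `x ↦ ∑ aᵢ x^{eᵢ}` by the scaling `x ↦ c x` gives the map with coefficients
`aᵢ c^{eᵢ - 1}`. Hence the dynamical class of a coefficient vector `a ∈ (F^*)^s` only depends
on its coset modulo the image `H` of `c ↦ (c^{eᵢ - 1})ᵢ`, and the number of classes is at most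
`[(F^*)^s : H] = (q - 1)^{s - 1} · |K|`, where `K` is the kernel of that map. As a subgroup of
the cyclic group `F^*`, `K` is cyclic of order dividing every `eᵢ - 1` and `q - 1`.
-/

open Finset

theorem numDynClasses_range_le_index {G α : Type*} [Group G] [Finite G] (φ : G → α → α)
    (H : Subgroup G) (hφ : ∀ a, ∀ h ∈ H, DynEquiv (φ a) (φ (a * h))) :
    numDynClasses (Set.range φ) ≤ H.index := by
  let cls : G → Quot (fun f g : Set.range φ => DynEquiv f.1 g.1) := fun a =>
    Quot.mk _ ⟨φ a, a, rfl⟩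
  have hcls : ∀ a b, QuotientGroup.leftRel H a b → cls a = cls b := by
    intro a b hab
    rw [QuotientGroup.leftRel_apply] at hab
    exact Quot.sound (by simpa using hφ a _ hab)
  refine Nat.card_le_card_of_surjective (Quotient.lift cls hcls) ?_
  rintro ⟨⟨f, a, rfl⟩⟩
  exact ⟨QuotientGroup.mk a, rfl⟩

theorem index_range_mul_card {G G' : Type*} [Group G] [Group G'] (f : G →* G') :
    f.range.index * Nat.card G = Nat.card G' * Nat.card f.ker := by
  rw [← f.ker.card_mul_index, Subgroup.index_ker f, ← f.range.index_mul_card]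
  ring

section

variable {ι : Type*}

def zpowPiHom {G : Type*} [CommGroup G] (d : ι → ℤ) : G →* ι → G :=
  MonoidHom.pi fun i => zpowGroupHom (d i)

@[simp]
theorem zpowPiHom_apply {G : Type*} [CommGroup G] (d : ι → ℤ) (c : G) (i : ι) :
    zpowPiHom d c i = c ^ d i :=
  rfl

variable [Fintype ι]

theorem card_ker_zpowPiHom_dvd {G : Type*} [CommGroup G] [IsCyclic G] [Finite G] (d : ι → ℤ) :
    Nat.card (zpowPiHom d : G →* ι → G).ker ∣ Int.gcd (univ.gcd d) (Nat.card G) := by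
  set K := (zpowPiHom d : G →* ι → G).ker
  have hexp : ∀ i, (Nat.card K : ℤ) ∣ d i := fun i => by
    rw [← IsCyclic.exponent_eq_card, Group.exponent_dvd_iff_forall_zpow_eq_one]
    rintro ⟨g, hg⟩
    exact Subtype.ext (congrFun hg i)
  have hdvd : (Nat.card K : ℤ) ∣ (Int.gcd (univ.gcd d) (Nat.card G) : ℤ) :=
    Int.dvd_coe_gcd (Finset.dvd_gcd fun i _ => hexp i)
      (Int.natCast_dvd_natCast.mpr K.card_subgroup_dvd_card)
  exact_mod_cast hdvd

def fewnomialMap {F : Type*} [Field F] (e : ι → ℕ) (a : ι → Fˣ) (x : F) : F :=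
  ∑ i, (a i : F) * x ^ e i

theorem dynEquiv_fewnomialMap_mul_zpowPiHom {F : Type*} [Field F] (e : ι → ℕ) (a : ι → Fˣ)
    (c : Fˣ) :
    DynEquiv (fewnomialMap e a) (fewnomialMap e (a * zpowPiHom (fun i => (e i : ℤ) - 1) c)) := by
  refine ⟨Units.mulLeft c⁻¹, fun x => ?_⟩
  simp only [fewnomialMap, Units.mulLeft_symm, inv_inv, Units.mulLeft_apply, Pi.mul_apply,
    zpowPiHom_apply, Units.val_mul, Units.val_zpow_eq_zpow_val, Units.val_inv_eq_inv_val,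
    mul_sum]
  refine sum_congr rfl fun i _ => ?_
  rw [zpow_sub_one₀ c.ne_zero, zpow_natCast, mul_pow, inv_pow]
  field_simp

end

theorem stmt0_general {F : Type*} [Field F] [Fintype F] (q : ℕ) (hq : Fintype.card F = q)
    (s : ℕ) (hs : 1 ≤ s) (e : Fin s → ℕ) :
    numDynClasses {f : F → F | ∃ a : Fin s → Fˣ, f = fun x => ∑ i, (a i : F) * x ^ (e i)} ≤
      (q - 1) ^ (s - 1) *
        Int.gcd (Finset.univ.gcd fun i : Fin s => (e i : ℤ) - 1) ((q : ℤ) - 1) := by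
  have hq2 : 2 ≤ q := hq ▸ Fintype.one_lt_card
  have hunits : Nat.card Fˣ = q - 1 := by
    rw [Nat.card_units, Nat.card_eq_fintype_card, hq]
  set ρ : Fˣ →* Fin s → Fˣ := zpowPiHom fun i => (e i : ℤ) - 1
  have hset : {f : F → F | ∃ a : Fin s → Fˣ, f = fun x => ∑ i, (a i : F) * x ^ (e i)} =
      Set.range (fewnomialMap e) :=
    Set.ext fun _ => exists_congr fun _ => eq_comm
  have hindex : ρ.range.index = (q - 1) ^ (s - 1) * Nat.card ρ.ker := by
    have h := index_range_mul_card ρ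
    rw [Nat.card_pi, hunits, prod_const, card_univ, Fintype.card_fin,
      ← pow_sub_one_mul (by omega : s ≠ 0), mul_right_comm] at h
    exact Nat.eq_of_mul_eq_mul_right (by omega) h
  have hker : Nat.card ρ.ker ∣ Int.gcd (univ.gcd fun i => (e i : ℤ) - 1) ((q : ℤ) - 1) := by
    simpa [hunits, Nat.cast_sub (by omega : 1 ≤ q)] using card_ker_zpowPiHom_dvd (G := Fˣ) _
  calc _ ≤ ρ.range.index := hset ▸ numDynClasses_range_le_index _ _
          (fun a _ ⟨c, hc⟩ => hc ▸ dynEquiv_fewnomialMap_mul_zpowPiHom e a c)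
    _ = (q - 1) ^ (s - 1) * Nat.card ρ.ker := hindex
    _ ≤ _ := Nat.mul_le_mul_left _ <| Nat.le_of_dvd (Int.gcd_pos_of_ne_zero_right _ (by omega))
          hker

theorem stmt0 {F : Type*} [Field F] [Fintype F] (q : ℕ) (hq : Fintype.card F = q)
    (s : ℕ) (hs : 1 ≤ s) (e : Fin s → ℕ) (he : Function.Injective e) :
    numDynClasses {f : F → F | ∃ a : Fin s → Fˣ, f = fun x => ∑ i, (a i : F) * x ^ (e i)} ≤
      (q - 1) ^ (s - 1) *
        Int.gcd (Finset.univ.gcd fun i : Fin s => (e i : ℤ) - 1) ((q : ℤ) - 1) :=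
  stmt0_general q hq s hs e
end

section
/- Let q = p^k with p prime and k ≥ 1, let s ≥ 1 be an integer, and let e_1, …, e_s be distinct non-negative integers. Then the number S_{e_1,…,e_s}(q) of dynamical-equivalence classes among the maps F_q → F_q of the form x ↦ a_1 x^{e_1} + … + a_s x^{e_s} with a_1, …, a_s ∈ F_q^* satisfies, as an inequality of real numbers, S_{e_1,…,e_s}(q) ≤ (p^k − 1)^s / k + 2 (p^{k/2} − 1)^s / k + (p^{k/3} − 1)^s, where p^{k/2} and p^{k/3} denote real powers. -/
/-!
The Galois group of `F` over `𝔽_p` is cyclic of order `k`, generated by the Frobenius `φ`, and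
acts coordinatewise on coefficient vectors `a ∈ (Fˣ)^s`. An automorphism `σ` conjugates the map
with coefficients `a` into the one with coefficients `σ a`, so there are at most as many classes
as orbits. By Burnside, the number of orbits is `(1/k) ∑_{j<k} |Fix φ^j|`, and the units fixed by
`φ^j` are the solutions of `u^(p^j - 1) = 1` in the cyclic group `Fˣ` of order `p^k - 1`; there
are `gcd (p^j - 1) (p^k - 1) = p^gcd(j,k) - 1` of them. In the sum, `j = 0` gives the main term,
`j = k/2` the middle one, and every other `j` has `gcd (j, k) ≤ k/3`.
-/

theorem dynEquiv_sum_map_mul_pow {R ι : Type*} [Semiring R] [Fintype ι] (σ : R ≃+* R)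
    (a : ι → R) (e : ι → ℕ) :
    DynEquiv (fun x => ∑ i, σ (a i) * x ^ e i) (fun x => ∑ i, a i * x ^ e i) :=
  ⟨σ.symm.toEquiv, fun x => by simp [map_sum]⟩

open MulAction in
theorem numDynClasses_range_le_card_orbits {G X α : Type*} [Group G] [MulAction G X] [Finite X]
    (c : X → α → α) (hc : ∀ (g : G) x, DynEquiv (c (g • x)) (c x)) :
    numDynClasses (Set.range c) ≤ Nat.card (orbitRel.Quotient G X) := by
  refine Nat.card_le_card_of_surjective
    (Quotient.lift (fun x => Quot.mk _ ⟨c x, x, rfl⟩) ?_) ?_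
  · rintro _ x ⟨g, rfl⟩
    exact Quot.sound (hc g x)
  · rintro ⟨⟨_, x, rfl⟩⟩
    exact ⟨⟦x⟧, rfl⟩

open MulAction in
theorem MulAction.card_fixedBy_pi {G Y ι : Type*} [Monoid G] [MulAction G Y] [Finite ι] (g : G) :
    Nat.card (fixedBy (ι → Y) g) = Nat.card (fixedBy Y g) ^ Nat.card ι := by
  rw [← Nat.card_fun]
  exact Nat.card_congr ((Equiv.subtypeEquivRight fun a => by
    simp only [mem_fixedBy, funext_iff]; rfl).trans Equiv.subtypePiEquivPi)

namespace FiniteField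

open MulAction

variable (K L : Type*) [Field K] [Fintype K] [Field L] [Finite L] [Algebra K L]

theorem card_fixedBy_units_frobenius_pow (j : ℕ) :
    Nat.card (fixedBy Lˣ (frobeniusAlgEquivOfAlgebraic K L ^ j)) =
      Fintype.card K ^ Nat.gcd j (Module.finrank K L) - 1 := by
  have hfix : fixedBy Lˣ (frobeniusAlgEquivOfAlgebraic K L ^ j) =
      (powMonoidHom (Fintype.card K ^ j - 1) : Lˣ →* Lˣ).ker := by
    ext u
    have hpow : (((frobeniusAlgEquivOfAlgebraic K L ^ j) • u : Lˣ) : L) =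
        (u : L) ^ Fintype.card K ^ j := by
      change (frobeniusAlgEquivOfAlgebraic K L ^ j) (u : L) = _
      rw [AlgEquiv.coe_pow, coe_frobeniusAlgEquivOfAlgebraic_iterate]
    rw [mem_fixedBy, SetLike.mem_coe, MonoidHom.mem_ker, powMonoidHom_apply, Units.ext_iff, hpow,
      ← Units.val_pow_eq_pow_val, Units.val_inj]
    conv_lhs => rw [← Nat.sub_add_cancel (Nat.one_le_pow j _ Fintype.card_pos), pow_succ]
    exact mul_eq_right
  have := Fintype.ofFinite L
  rw [hfix, SetLike.coe_sort_coe, IsCyclic.card_powMonoidHom_ker, Nat.card_units,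
    Nat.card_eq_fintype_card, Module.card_eq_pow_finrank (K := K) (V := L),
    Nat.pow_sub_one_gcd_pow_sub_one, Nat.gcd_comm]

theorem card_orbits_units_pi_mul_finrank (ι : Type*) [Finite ι] :
    Nat.card (orbitRel.Quotient Gal(L/K) (ι → Lˣ)) * Module.finrank K L =
      ∑ j ∈ Finset.range (Module.finrank K L),
        (Fintype.card K ^ Nat.gcd j (Module.finrank K L) - 1) ^ Nat.card ι := by
  classical
  have := Fintype.ofFinite L
  have := Fintype.ofFinite ι
  have := Fintype.ofFinite Gal(L/K)
  have hbij := bijective_frobeniusAlgEquivOfAlgebraic_pow K L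
  have hcard : Nat.card Gal(L/K) = Module.finrank K L := by
    rw [← Nat.card_eq_of_bijective _ hbij, Nat.card_eq_fintype_card, Fintype.card_fin]
  have burnside := sum_card_fixedBy_eq_card_orbits_mul_card_group Gal(L/K) (ι → Lˣ)
  simp only [Fintype.card_eq_nat_card] at burnside
  rw [← hcard, ← burnside, ← hbij.sum_comp, Fin.sum_univ_eq_sum_range (fun j =>
    Nat.card (fixedBy (ι → Lˣ) (frobeniusAlgEquivOfAlgebraic K L ^ j))), hcard]
  simp only [card_fixedBy_pi, card_fixedBy_units_frobenius_pow]

end FiniteField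

theorem Nat.three_mul_gcd_le {j k : ℕ} (hj : 0 < j) (hjk : j < k) (h2 : 2 * j ≠ k) :
    3 * Nat.gcd j k ≤ k := by
  obtain ⟨u, hu⟩ := Nat.gcd_dvd_left j k
  obtain ⟨t, ht⟩ := Nat.gcd_dvd_right j k
  have hd : 0 < Nat.gcd j k := Nat.gcd_pos_of_pos_left k hj
  by_contra! h
  have ht2 : t ≤ 2 := by nlinarith
  interval_cases t
  · omega
  · nlinarith [Nat.gcd_le_left k hj]
  · have hu1 : u = 1 := by
      rcases Nat.lt_or_ge u 2 with hu2 | hu2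
      · interval_cases u <;> omega
      · nlinarith
    subst hu1
    omega

open Finset in
theorem sum_range_gcd_le (g : ℝ → ℝ) (hg : MonotoneOn g (Set.Ici 0))
    (hg0 : ∀ x, 0 ≤ x → 0 ≤ g x) (k : ℕ) :
    ∑ j ∈ range k, g (Nat.gcd j k) ≤ g k + g (k / 2) + k * g (k / 3) := by
  have hk2 := hg0 (k / 2) (by positivity)
  have hk3 := hg0 (k / 3) (by positivity)
  have hterm : ∀ j ∈ range k, g (Nat.gcd j k) ≤
      (if j = 0 then g k else 0) + (if j = k / 2 then g (k / 2) else 0) + g (k / 3) := by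
    intro j hj
    rw [mem_range] at hj
    rcases Nat.eq_zero_or_pos j with rfl | hj0
    · simp only [Nat.gcd_zero_left, if_true]
      split_ifs <;> linarith
    by_cases h2 : 2 * j = k
    · have hgcd : Nat.gcd j k = j := Nat.gcd_eq_left ⟨2, by omega⟩
      have hjR : (j : ℝ) = k / 2 := by rw [← h2]; push_cast; ring
      rw [if_neg hj0.ne', if_pos (by omega), hgcd, hjR]
      linarith
    · have h3 : (Nat.gcd j k : ℝ) ≤ k / 3 := by
        rw [le_div_iff₀ (by norm_num), mul_comm]
        exact_mod_cast Nat.three_mul_gcd_le hj0 hj h2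
      have := hg (Set.mem_Ici.2 (by positivity)) (Set.mem_Ici.2 (by positivity)) h3
      split_ifs <;> linarith
  calc ∑ j ∈ range k, g (Nat.gcd j k)
      ≤ ∑ j ∈ range k,
          ((if j = 0 then g k else 0) + (if j = k / 2 then g (k / 2) else 0) + g (k / 3)) :=
        sum_le_sum hterm
    _ = (if 0 ∈ range k then g k else 0) + (if k / 2 ∈ range k then g (k / 2) else 0)
          + k * g (k / 3) := by
        rw [sum_add_distrib, sum_add_distrib, sum_ite_eq', sum_ite_eq', sum_const, card_range,
          nsmul_eq_mul]
    _ ≤ g k + g (k / 2) + k * g (k / 3) := by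
        have := hg0 k (by positivity)
        split_ifs <;> linarith

theorem monotoneOn_rpow_sub_one_pow {b : ℝ} (hb : 1 ≤ b) (n : ℕ) :
    MonotoneOn (fun x : ℝ => (b ^ x - 1) ^ n) (Set.Ici 0) := fun _ hx _ _ hxy =>
  pow_le_pow_left₀ (sub_nonneg.2 (Real.one_le_rpow hb hx))
    (sub_le_sub_right (Real.rpow_le_rpow_of_exponent_le hb hxy) 1) n

theorem rpow_sub_one_pow_nonneg {b x : ℝ} (hb : 1 ≤ b) (hx : 0 ≤ x) (n : ℕ) :
    0 ≤ (b ^ x - 1) ^ n :=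
  pow_nonneg (sub_nonneg.2 (Real.one_le_rpow hb hx)) n

theorem cast_le_of_mul_eq_sum_range_pow_gcd {N p k s : ℕ} (hp : 1 ≤ p) (hk : 1 ≤ k)
    (h : N * k = ∑ j ∈ Finset.range k, (p ^ Nat.gcd j k - 1) ^ s) :
    (N : ℝ) ≤ ((p : ℝ) ^ k - 1) ^ s / k + 2 * ((p : ℝ) ^ ((k : ℝ) / 2) - 1) ^ s / k
        + ((p : ℝ) ^ ((k : ℝ) / 3) - 1) ^ s := by
  set g : ℝ → ℝ := fun x => ((p : ℝ) ^ x - 1) ^ s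
  have hpR : (1 : ℝ) ≤ p := by exact_mod_cast hp
  have hkR : (0 : ℝ) < k := by exact_mod_cast hk
  have hNk : (N : ℝ) * k = ∑ j ∈ Finset.range k, g (Nat.gcd j k) := by
    rw [← Nat.cast_mul, h, Nat.cast_sum]
    refine Finset.sum_congr rfl fun j _ => ?_
    rw [Nat.cast_pow, Nat.cast_sub (Nat.one_le_pow _ _ hp), Nat.cast_pow, Nat.cast_one]
    simp only [g, Real.rpow_natCast]
  have hsum := sum_range_gcd_le g (monotoneOn_rpow_sub_one_pow hpR s)
    (fun x hx => rpow_sub_one_pow_nonneg hpR hx s) k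
  have hhalf : 0 ≤ g (k / 2) / k := div_nonneg (rpow_sub_one_pow_nonneg hpR (by positivity) s) hkR.le
  calc (N : ℝ) = (∑ j ∈ Finset.range k, g (Nat.gcd j k)) / k := by
        rw [← hNk, mul_div_cancel_right₀ _ hkR.ne']
    _ ≤ (g k + g (k / 2) + k * g (k / 3)) / k := by gcongr
    _ = g k / k + g (k / 2) / k + g (k / 3) := by
        rw [add_div, add_div, mul_div_cancel_left₀ _ hkR.ne']
    _ ≤ _ := by
        simp only [g, Real.rpow_natCast] at hhalf ⊢
        rw [mul_div_assoc]
        linarith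

theorem stmt1_general {F : Type*} [Field F] [Fintype F] (p k : ℕ) [Fact p.Prime] (hk : 1 ≤ k)
    (hq : Fintype.card F = p ^ k)
    (s : ℕ) (e : Fin s → ℕ) :
    (numDynClasses {f : F → F | ∃ a : Fin s → Fˣ, f = fun x => ∑ i, (a i : F) * x ^ (e i)} : ℝ) ≤
      ((p : ℝ) ^ k - 1) ^ s / k + 2 * ((p : ℝ) ^ ((k : ℝ) / 2) - 1) ^ s / k
        + ((p : ℝ) ^ ((k : ℝ) / 3) - 1) ^ s := by
  have : CharP F p := charP_of_card_eq_prime_pow hq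
  let := ZMod.algebra F p
  have hfinrank : Module.finrank (ZMod p) F = k := by
    apply Nat.pow_right_injective (Fact.out : p.Prime).two_le
    dsimp only
    rw [← hq, Module.card_eq_pow_finrank (K := ZMod p) (V := F), ZMod.card]
  have hS : {f : F → F | ∃ a : Fin s → Fˣ, f = fun x => ∑ i, (a i : F) * x ^ (e i)} =
      Set.range fun (a : Fin s → Fˣ) (x : F) => ∑ i, (a i : F) * x ^ e i := by
    ext f
    simp [eq_comm]
  have hclasses := numDynClasses_range_le_card_orbits (G := Gal(F/ZMod p))
    (fun (a : Fin s → Fˣ) (x : F) => ∑ i, (a i : F) * x ^ e i)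
    fun σ a => dynEquiv_sum_map_mul_pow σ.toRingEquiv (fun i => (a i : F)) e
  have hburnside := FiniteField.card_orbits_units_pi_mul_finrank (ZMod p) F (Fin s)
  rw [hfinrank, ZMod.card, Nat.card_fin] at hburnside
  rw [hS]
  exact (Nat.cast_le.2 hclasses).trans
    (cast_le_of_mul_eq_sum_range_pow_gcd (Fact.out : p.Prime).one_le hk hburnside)

theorem stmt1 {F : Type*} [Field F] [Fintype F] (p k : ℕ) [Fact p.Prime] (hk : 1 ≤ k)
    (hq : Fintype.card F = p ^ k)
    (s : ℕ) (hs : 1 ≤ s) (e : Fin s → ℕ) (he : Function.Injective e) :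
    (numDynClasses {f : F → F | ∃ a : Fin s → Fˣ, f = fun x => ∑ i, (a i : F) * x ^ (e i)} : ℝ) ≤
      ((p : ℝ) ^ k - 1) ^ s / k + 2 * ((p : ℝ) ^ ((k : ℝ) / 2) - 1) ^ s / k
        + ((p : ℝ) ^ ((k : ℝ) / 3) - 1) ^ s :=
  stmt1_general p k hk hq s e
end

section
/- Let q = p^k with p prime and k ≥ 1, let s ≥ 1 be an integer, and let e_1, …, e_s be distinct non-negative integers. Then the number S_{e_1,…,e_s}(q) of dynamical-equivalence classes among the maps F_q → F_q of the form x ↦ a_1 x^{e_1} + … + a_s x^{e_s} with a_1, …, a_s ∈ F_q^* satisfies, as an inequality of rational numbers, S_{e_1,…,e_s}(q) ≤ Σ_{e | k} (μ(e)/e) · Σ_{d | k/e} (p^d − 1)^s / d, where μ is the Möbius function and the sums range over positive divisors. -/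
/-!
Conjugating by the Frobenius automorphism `x ↦ x ^ p` replaces the coefficients `aᵢ` by `aᵢ ^ p`,
so the number of classes is at most the number of orbits of `ZMod k` acting on `(Fˣ)ˢ` through
coordinatewise powers of Frobenius. By Burnside, `k` times the number of orbits is
`∑_{j < k} (p ^ gcd(k, j) - 1) ^ s = ∑_{d ∣ k} φ(k / d) (p ^ d - 1) ^ s`, because `x ^ (p ^ j) = x`
has `gcd(p ^ k - 1, p ^ j - 1) = p ^ gcd(k, j) - 1` solutions in the cyclic group `Fˣ`. The
identity `φ(m) / m = ∑_{u ∣ m} μ(u) / u` turns this into the right-hand side.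
-/

open Finset Function

lemma dynEquiv_sum_monomials_map {R ι : Type*} [CommSemiring R] [Fintype ι] (τ : R ≃+* R)
    (c : ι → R) (e : ι → ℕ) :
    DynEquiv (fun x => ∑ i, τ (c i) * x ^ e i) (fun x => ∑ i, c i * x ^ e i) :=
  ⟨τ.symm.toEquiv, fun x => by simp [map_sum]⟩

section IterateAction

variable {X : Type*} {k : ℕ} [NeZero k]

abbrev iterateAddAction (f : X → X) (hf : f^[k] = id) : AddAction (ZMod k) X where
  vadd j x := f^[j.val] x
  zero_vadd x := by
    change f^[(0 : ZMod k).val] x = x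
    rw [ZMod.val_zero, iterate_zero_apply]
  add_vadd i j x := by
    have hper : IsPeriodicPt f k x := by simp [IsPeriodicPt, IsFixedPt, hf]
    change f^[(i + j).val] x = f^[i.val] (f^[j.val] x)
    rw [ZMod.val_add, hper.iterate_mod_apply, iterate_add_apply]

lemma Nat.card_fixedPoints_pi_comp (ι : Type*) [Fintype ι] (g : X → X) :
    Nat.card {a : ι → X // g ∘ a = a} = Nat.card (fixedPoints g) ^ Fintype.card ι := by
  rw [Nat.card_congr <| (Equiv.subtypeEquivRight (p := fun a : ι → X => g ∘ a = a)
      (q := fun a : ι → X => ∀ i, g (a i) = a i) fun a => funext_iff).trans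
      (Equiv.subtypePiEquivPi (p := fun _ x => g x = x)),
    Nat.card_pi, prod_const, Finset.card_univ]
  rfl

lemma ZMod.sum_comp_val {M : Type*} [AddCommMonoid M] (n : ℕ) [NeZero n] (g : ℕ → M) :
    ∑ j : ZMod n, g j.val = ∑ i ∈ range n, g i := by
  cases n with
  | zero => exact absurd rfl (NeZero.ne 0)
  | succ n => exact Fin.sum_univ_eq_sum_range g _

lemma apply_iterate_comp_eq {ι Y : Type*} {f : X → X} {φ : (ι → X) → Y}
    (hφ : ∀ a, φ (f ∘ a) = φ a) (n : ℕ) (a : ι → X) : φ (f^[n] ∘ a) = φ a := by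
  induction n with
  | zero => rfl
  | succ n ih => rw [iterate_succ', comp_assoc, hφ, ih]

lemma Nat.card_mul_le_sum_card_fixedPoints_iterate [Finite X] {ι Y : Type*} [Fintype ι]
    (f : X → X) (hf : f^[k] = id) (φ : (ι → X) → Y) (hφ : Surjective φ)
    (hinv : ∀ a, φ (f ∘ a) = φ a) :
    Nat.card Y * k ≤ ∑ i ∈ range k, Nat.card (fixedPoints f^[i]) ^ Fintype.card ι := by
  classical
  let := iterateAddAction f hf
  let Ω := AddAction.orbitRel.Quotient (ZMod k) (ι → X)
  have hΩ : Nat.card Y ≤ Nat.card Ω := by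
    refine Nat.card_le_card_of_surjective (Quotient.lift φ ?_) fun y => ?_
    · rintro _ a ⟨j, rfl⟩
      exact apply_iterate_comp_eq hinv _ a
    · obtain ⟨a, rfl⟩ := hφ y
      exact ⟨Quotient.mk _ a, rfl⟩
  have : Fintype Ω := Fintype.ofFinite Ω
  have : ∀ j : ZMod k, Fintype (AddAction.fixedBy (ι → X) j) := fun _ => Fintype.ofFinite _
  have burnside := AddAction.sum_card_fixedBy_eq_card_orbits_mul_card_addGroup (ZMod k) (ι → X)
  simp only [Fintype.card_eq_nat_card, Nat.card_zmod] at burnside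
  calc Nat.card Y * k ≤ Nat.card Ω * k := Nat.mul_le_mul_right k hΩ
    _ = ∑ j : ZMod k, Nat.card {a : ι → X // f^[j.val] ∘ a = a} := burnside.symm
    _ = ∑ i ∈ range k, Nat.card (fixedPoints f^[i]) ^ Fintype.card ι := by
      simp only [Nat.card_fixedPoints_pi_comp]
      exact ZMod.sum_comp_val k fun i => Nat.card (fixedPoints f^[i]) ^ Fintype.card ι

end IterateAction

lemma IsCyclic.card_fixedPoints_pow {G : Type*} [CommGroup G] [IsCyclic G] [Finite G] {n : ℕ}
    (hn : n ≠ 0) : Nat.card (fixedPoints (· ^ n : G → G)) = (Nat.card G).gcd (n - 1) := by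
  rw [← IsCyclic.card_powMonoidHom_ker]
  refine Nat.card_congr (Equiv.subtypeEquivRight fun x => ?_)
  obtain ⟨m, rfl⟩ := Nat.exists_eq_succ_of_ne_zero hn
  simp [IsFixedPt, pow_succ]

section FiniteField

variable {F : Type*} [Field F] [Fintype F] {p k : ℕ}

lemma iterate_pow_units_eq_id (hq : Fintype.card F = p ^ k) :
    (fun x : Fˣ => x ^ p)^[k] = id := by
  funext x
  rw [pow_iterate, ← hq]
  ext
  simp [FiniteField.pow_card]

lemma card_fixedPoints_iterate_pow_units (hq : Fintype.card F = p ^ k) (hp : p ≠ 0) (i : ℕ) :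
    Nat.card (fixedPoints (fun x : Fˣ => x ^ p)^[i]) = p ^ k.gcd i - 1 := by
  classical
  rw [pow_iterate, IsCyclic.card_fixedPoints_pow (pow_ne_zero i hp), Nat.card_eq_fintype_card,
    Fintype.card_units, hq, Nat.pow_sub_one_gcd_pow_sub_one]

end FiniteField

namespace Nat

lemma sum_range_comp_gcd {M : Type*} [AddCommMonoid M] (n : ℕ) (g : ℕ → M) :
    ∑ i ∈ range n, g (n.gcd i) = ∑ d ∈ n.divisors, φ (n / d) • g d := by
  rw [← sum_fiberwise_of_maps_to (g := n.gcd) (t := n.divisors) fun i hi =>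
    mem_divisors.mpr ⟨n.gcd_dvd_left i, by grind⟩]
  refine sum_congr rfl fun d hd => ?_
  rw [totient_div_of_dvd (dvd_of_mem_divisors hd), ← sum_const]
  exact sum_congr rfl fun i hi => by rw [(mem_filter.mp hi).2]

lemma mem_divisors_and_mem_divisors_div {n u d : ℕ} :
    u ∈ n.divisors ∧ d ∈ (n / u).divisors ↔ u * d ∣ n ∧ n ≠ 0 := by
  simp only [mem_divisors]
  constructor
  · rintro ⟨⟨hu, hn⟩, hd, -⟩
    exact ⟨(Nat.dvd_div_iff_mul_dvd hu).mp hd, hn⟩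
  · rintro ⟨hud, hn⟩
    have hu : u ∣ n := dvd_of_mul_right_dvd hud
    refine ⟨⟨hu, hn⟩, (Nat.dvd_div_iff_mul_dvd hu).mpr hud, ?_⟩
    exact (Nat.div_ne_zero_iff_of_dvd hu).mpr ⟨hn, by rintro rfl; simp_all⟩

lemma sum_divisors_sum_divisors_div_comm {M : Type*} [AddCommMonoid M] (n : ℕ)
    (f : ℕ → ℕ → M) :
    ∑ u ∈ n.divisors, ∑ d ∈ (n / u).divisors, f u d =
      ∑ d ∈ n.divisors, ∑ u ∈ (n / d).divisors, f u d :=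
  sum_comm' fun u d => by
    rw [mem_divisors_and_mem_divisors_div, and_comm (a := u ∈ (n / d).divisors),
      mem_divisors_and_mem_divisors_div, mul_comm]

lemma sum_divisors_moebius_div {K : Type*} [Field K] [CharZero K] (m : ℕ) :
    ∑ u ∈ m.divisors, (ArithmeticFunction.moebius u : K) / u = φ m / m := by
  rcases m.eq_zero_or_pos with rfl | hm
  · simp
  have hinv : ∑ x ∈ m.divisorsAntidiagonal, (ArithmeticFunction.moebius x.1 : K) * x.2 = φ m :=
    (ArithmeticFunction.sum_eq_iff_sum_mul_moebius_eq (f := fun n => (φ n : K))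
      (g := fun n => (n : K))).mp (fun n _ => mod_cast sum_totient n) m hm
  rw [← hinv, sum_div,
    sum_divisorsAntidiagonal fun u v => (ArithmeticFunction.moebius u : K) * v / m]
  refine sum_congr rfl fun u hu => ?_
  have hu0 : (u : K) ≠ 0 := by exact_mod_cast (pos_of_mem_divisors hu).ne'
  have hm0 : (m : K) ≠ 0 := by exact_mod_cast hm.ne'
  rw [cast_div (dvd_of_mem_divisors hu) hu0]
  field_simp

lemma sum_moebius_div_mul_sum_divisors_div {K : Type*} [Field K] [CharZero K] (n : ℕ)
    (X : ℕ → K) :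
    ∑ u ∈ n.divisors, (ArithmeticFunction.moebius u : K) / u * ∑ d ∈ (n / u).divisors, X d / d =
      (∑ d ∈ n.divisors, φ (n / d) * X d) / n := by
  calc _ = ∑ d ∈ n.divisors, ∑ u ∈ (n / d).divisors,
          (ArithmeticFunction.moebius u : K) / u * (X d / d) := by
        simp_rw [mul_sum]
        exact sum_divisors_sum_divisors_div_comm n _
    _ = ∑ d ∈ n.divisors, (φ (n / d) : K) / (n / d : ℕ) * (X d / d) := by
        simp_rw [← sum_mul, sum_divisors_moebius_div]
    _ = _ := by
        rw [sum_div]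
        refine sum_congr rfl fun d hd => ?_
        have hd0 : (d : K) ≠ 0 := by exact_mod_cast (pos_of_mem_divisors hd).ne'
        have hnd0 : ((n / d : ℕ) : K) ≠ 0 := by
          exact_mod_cast (Nat.div_pos (divisor_le hd) (pos_of_mem_divisors hd)).ne'
        rw [cast_div (dvd_of_mem_divisors hd) hd0] at hnd0 ⊢
        field_simp

end Nat

theorem stmt2_general {F : Type*} [Field F] [Fintype F] (p k : ℕ) [Fact p.Prime]
    (hq : Fintype.card F = p ^ k)
    (s : ℕ) (e : Fin s → ℕ) :
    (numDynClasses {f : F → F | ∃ a : Fin s → Fˣ, f = fun x => ∑ i, (a i : F) * x ^ (e i)} : ℚ) ≤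
      ∑ u ∈ k.divisors, ((ArithmeticFunction.moebius u : ℚ) / u) *
        ∑ d ∈ (k / u).divisors, ((p : ℚ) ^ d - 1) ^ s / d := by
  have hp := (Fact.out : p.Prime)
  have : NeZero k := ⟨by rintro rfl; simpa [hq] using Fintype.one_lt_card (α := F)⟩
  have : CharP F p := charP_of_card_eq_prime_pow hq
  set S := {f : F → F | ∃ a : Fin s → Fˣ, f = fun x => ∑ i, (a i : F) * x ^ (e i)}
  let cls : (Fin s → Fˣ) → Quot fun f g : S => DynEquiv f.1 g.1 := fun a => Quot.mk _ ⟨_, a, rfl⟩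
  have hsurj : Surjective cls := by
    rintro ⟨⟨f, a, rfl⟩⟩
    exact ⟨a, rfl⟩
  have hinv : ∀ a, cls ((· ^ p) ∘ a) = cls a := fun a => Quot.sound <| by
    simpa [frobenius_def] using
      dynEquiv_sum_monomials_map (frobeniusEquiv F p) (fun i => (a i : F)) e
  have hcount := Nat.card_mul_le_sum_card_fixedPoints_iterate _ (iterate_pow_units_eq_id hq)
    cls hsurj hinv
  simp only [card_fixedPoints_iterate_pow_units hq hp.ne_zero, Fintype.card_fin,
    Nat.sum_range_comp_gcd k fun d => (p ^ d - 1) ^ s, smul_eq_mul] at hcount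
  have hcast (d : ℕ) : (((p ^ d - 1) ^ s : ℕ) : ℚ) = ((p : ℚ) ^ d - 1) ^ s := by
    push_cast [Nat.one_le_pow d p hp.pos]
    rfl
  rw [Nat.sum_moebius_div_mul_sum_divisors_div, le_div_iff₀ (mod_cast Nat.pos_of_neZero k)]
  calc _ ≤ ((∑ d ∈ k.divisors, Nat.totient (k / d) * (p ^ d - 1) ^ s : ℕ) : ℚ) := mod_cast hcount
    _ = _ := by simp only [Nat.cast_sum, Nat.cast_mul, hcast]

theorem stmt2 {F : Type*} [Field F] [Fintype F] (p k : ℕ) [Fact p.Prime] (hk : 1 ≤ k)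
    (hq : Fintype.card F = p ^ k)
    (s : ℕ) (hs : 1 ≤ s) (e : Fin s → ℕ) (he : Function.Injective e) :
    (numDynClasses {f : F → F | ∃ a : Fin s → Fˣ, f = fun x => ∑ i, (a i : F) * x ^ (e i)} : ℚ) ≤
      ∑ u ∈ k.divisors, ((ArithmeticFunction.moebius u : ℚ) / u) *
        ∑ d ∈ (k / u).divisors, ((p : ℚ) ^ d - 1) ^ s / d :=
  stmt2_general p k hq s e
end

section
/- Let q = p^k with p prime and k a prime number, let s ≥ Büyük1 be an integer, and let e_1, …, e_s be distinct non-negative integers. Then the number S_{e_1,…,e_s}(q) of dynamical-equivalence classes among the maps F_q → F_q of the form x ↦ a_1 x^{e_1} + … + a_s x^{e_s} with a_1, …, a_s ∈ F_q^* satisfies, as an inequality of rational numbers, S_{e_1,…,e_s}(q) ≤ (q − 1)^s / k + ((k − 1)/k) · (p − 1)^s. -/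
open MulAction

theorem numDynClasses_range_le_card_orbitRel_quotient {G X α : Type*} [Group G] [MulAction G X]
    [Finite X] (φ : X → α → α) (hφ : ∀ (g : G) x, DynEquiv (φ x) (φ (g • x))) :
    numDynClasses (Set.range φ) ≤ Nat.card (orbitRel.Quotient G X) := by
  let Φ : orbitRel.Quotient G X → Quot (fun f g : Set.range φ => DynEquiv f.1 g.1) :=
    Quotient.lift (fun x => Quot.mk _ ⟨φ x, x, rfl⟩) <| by
      rintro _ x ⟨g, rfl⟩
      exact (Quot.sound (r := fun f g : Set.range φ => DynEquiv f.1 g.1)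
        (a := ⟨φ x, x, rfl⟩) (b := ⟨φ (g • x), g • x, rfl⟩) (hφ g x)).symm
  refine Nat.card_le_card_of_surjective Φ ?_
  rintro ⟨⟨_, x, rfl⟩⟩
  exact ⟨Quotient.mk _ x, rfl⟩

theorem card_orbitRel_quotient_mul_card_le {G X : Type*} [Group G] [MulAction G X] [Finite G]
    [Finite X] {m : ℕ} (hm : ∀ g : G, g ≠ 1 → Nat.card (fixedBy X g) ≤ m) :
    Nat.card (orbitRel.Quotient G X) * Nat.card G ≤ Nat.card X + (Nat.card G - 1) * m := by
  classical
  have := Fintype.ofFinite G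
  have := Fintype.ofFinite X
  have hburnside := sum_card_fixedBy_eq_card_orbits_mul_card_group G X
  simp only [Fintype.card_eq_nat_card] at hburnside
  rw [← hburnside, ← Finset.sum_erase_add _ _ (Finset.mem_univ 1), add_comm]
  have : fixedBy X (1 : G) = Set.univ := by ext; simp
  gcongr
  · rw [this, Nat.card_univ]
  · calc _ ≤ (Finset.univ.erase (1 : G)).card • m :=
          Finset.sum_le_card_nsmul _ _ _ fun g hg => hm g (Finset.ne_of_mem_erase hg)
      _ = _ := by
        rw [Finset.card_erase_of_mem (Finset.mem_univ 1), Finset.card_univ,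
          Fintype.card_eq_nat_card, smul_eq_mul]

theorem dynEquiv_sum_smul {G R ι : Type*} [Group G] [CommSemiring R] [MulSemiringAction G R]
    [Fintype ι] (e : ι → ℕ) (a : ι → R) (g : G) :
    DynEquiv (fun x => ∑ i, a i * x ^ e i) (fun x => ∑ i, (g • a) i * x ^ e i) := by
  refine ⟨MulAction.toPerm g, fun x => ?_⟩
  rw [Equiv.symm_apply_eq]
  simp only [toPerm_apply, Finset.smul_sum, smul_mul', smul_pow', Pi.smul_apply]

theorem mem_range_algebraMap_of_algEquiv_apply_eq {K L : Type*} [Field K] [Field L]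
    [Algebra K L] [FiniteDimensional K L] [IsGalois K L] (hprime : (Module.finrank K L).Prime)
    {σ : Gal(L/K)} (hσ : σ ≠ 1) {x : L} (hx : σ x = x) : x ∈ Set.range (algebraMap K L) := by
  have := Fact.mk hprime
  rw [← IntermediateField.mem_bot, ← IsGalois.fixedField_top,
    ← zpowers_eq_top_of_prime_card (IsGalois.card_aut_eq_finrank K L) hσ,
    IntermediateField.mem_fixedField_iff]
  intro τ hτ
  exact (Subgroup.zpowers_le.mpr hx : Subgroup.zpowers σ ≤ stabilizer Gal(L/K) x) hτ

attribute [local instance] Units.mulDistribMulActionRight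

theorem card_fixedBy_pi_units_le {K L ι : Type*} [Field K] [Field L] [Algebra K L] [Finite L]
    [Finite ι] (hprime : (Module.finrank K L).Prime) {σ : Gal(L/K)} (hσ : σ ≠ 1) :
    Nat.card (fixedBy (ι → Lˣ) σ) ≤ (Nat.card K - 1) ^ Nat.card ι := by
  have hsub : fixedBy (ι → Lˣ) σ ⊆
      Set.range fun v : ι → Kˣ => fun i => Units.map (algebraMap K L : K →* L) (v i) := by
    intro a ha
    have hfix i : σ (a i : L) = a i := congrArg Units.val (congrFun ha i)
    choose y hy using fun i => mem_range_algebraMap_of_algEquiv_apply_eq hprime hσ (hfix i)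
    have hy0 i : y i ≠ 0 := fun h => (a i).ne_zero (by rw [← hy i, h, map_zero])
    exact ⟨fun i => Units.mk0 (y i) (hy0 i), funext fun i => Units.ext (hy i)⟩
  have := Finite.of_injective _ (algebraMap K L).injective
  calc Nat.card (fixedBy (ι → Lˣ) σ) ≤ Nat.card (Set.range _) :=
        Nat.card_mono (Set.toFinite _) hsub
    _ ≤ Nat.card (ι → Kˣ) := Finite.card_range_le _
    _ = (Nat.card K - 1) ^ Nat.card ι := by rw [Nat.card_fun, Nat.card_units]

theorem card_orbitRel_quotient_pi_units_mul_finrank_le {K L ι : Type*} [Field K] [Field L]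
    [Algebra K L] [Finite L] [Finite ι] (hprime : (Module.finrank K L).Prime) :
    Nat.card (orbitRel.Quotient Gal(L/K) (ι → Lˣ)) * Module.finrank K L ≤
      (Nat.card L - 1) ^ Nat.card ι +
        (Module.finrank K L - 1) * (Nat.card K - 1) ^ Nat.card ι := by
  have h := card_orbitRel_quotient_mul_card_le fun σ hσ =>
    card_fixedBy_pi_units_le (ι := ι) hprime hσ
  rwa [IsGalois.card_aut_eq_finrank, Nat.card_fun, Nat.card_units] at h

theorem stmt3_general {F : Type*} [Field F] [Fintype F] (p k : ℕ) [Fact p.Prime] (hk : k.Prime)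
    (hq : Fintype.card F = p ^ k)
    (s : ℕ) (e : Fin s → ℕ) :
    (numDynClasses {f : F → F | ∃ a : Fin s → Fˣ, f = fun x => ∑ i, (a i : F) * x ^ (e i)} : ℚ) ≤
      ((p : ℚ) ^ k - 1) ^ s / k + ((k : ℚ) - 1) / k * ((p : ℚ) - 1) ^ s := by
  have hp : p.Prime := Fact.out
  have := charP_of_card_eq_prime_pow hq
  let := ZMod.algebra F p
  have hfinrank : Module.finrank (ZMod p) F = k :=
    Nat.pow_right_injective hp.two_le
      (show p ^ _ = p ^ k by rw [FiniteField.pow_finrank_eq_card, hq])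
  have hS : {f : F → F | ∃ a : Fin s → Fˣ, f = fun x => ∑ i, (a i : F) * x ^ (e i)} =
      Set.range fun (a : Fin s → Fˣ) x => ∑ i, (a i : F) * x ^ (e i) := by
    ext; simp [eq_comm]
  have hclasses := numDynClasses_range_le_card_orbitRel_quotient (G := Gal(F/ZMod p))
    (fun (a : Fin s → Fˣ) x => ∑ i, (a i : F) * x ^ (e i))
    fun g a => dynEquiv_sum_smul e (fun i => (a i : F)) g
  have horbits := card_orbitRel_quotient_pi_units_mul_finrank_le (ι := Fin s) (hfinrank ▸ hk)
  rw [hfinrank, Nat.card_eq_fintype_card (α := F), hq, Nat.card_zmod, Nat.card_fin] at horbits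
  have hk0 : (0 : ℚ) < k := by exact_mod_cast hk.pos
  have horbitsℚ := (Nat.cast_le (α := ℚ)).mpr horbits
  push_cast [Nat.cast_sub hp.one_le, Nat.cast_sub (Nat.one_le_pow k p hp.pos),
    Nat.cast_sub hk.one_le] at horbitsℚ
  rw [hS, div_mul_eq_mul_div, ← add_div, le_div_iff₀ hk0]
  calc _ ≤ (Nat.card (orbitRel.Quotient Gal(F/ZMod p) (Fin s → Fˣ)) : ℚ) * k :=
        mul_le_mul_of_nonneg_right (by exact_mod_cast hclasses) hk0.le
    _ ≤ _ := horbitsℚ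

theorem stmt3 {F : Type*} [Field F] [Fintype F] (p k : ℕ) [Fact p.Prime] (hk : k.Prime)
    (hq : Fintype.card F = p ^ k)
    (s : ℕ) (hs : 1 ≤ s) (e : Fin s → ℕ) (he : Function.Injective e) :
    (numDynClasses {f : F → F | ∃ a : Fin s → Fˣ, f = fun x => ∑ i, (a i : F) * x ^ (e i)} : ℚ) ≤
      ((p : ℚ) ^ k - 1) ^ s / k + ((k : ℚ) - 1) / k * ((p : ℚ) - 1) ^ s :=
  stmt3_general p k hk hq s e
end

section
/- Let q be a prime power. The number of dynamical-equivalence classes among the maps F_q → F_q of the form x ↦ a x + b with a ∈ F_q^* and b ∈ F_q is exactly τ(q − 1) + 1, where τ(n) is the number of positive divisors of n. -/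
/-!
An affine map `x ↦ a * x + b` with `a ≠ 1` has the fixed point `b / (1 - a)` and is conjugate
to `x ↦ a * x`; for `a = 1`, `b ≠ 0` it is a translation, and all translations are conjugate by
scalings. If `a, a'` have the same multiplicative order `d`, they are primitive `d`-th roots of
unity, so `a' = a ^ i` with `i` prime to `d`; lifting `i` to a `k ≡ i [MOD d]` prime to `q - 1`,
the power map `x ↦ x ^ k` is a bijection conjugating `x ↦ a * x` to `x ↦ a' * x`.
Hence the class of an affine map is determined by its order under composition: `char F` for a
translation, `orderOf a ∣ q - 1` otherwise. Every divisor of `q - 1` occurs since `F_qˣ` is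
cyclic, and `char F ∤ q - 1`, which gives `τ(q - 1) + 1` classes.
-/

open Function

namespace DynEquiv

variable {α : Type*} {f g h : α → α}

@[refl]
lemma refl (f : α → α) : DynEquiv f f := ⟨Equiv.refl α, fun _ => rfl⟩

@[symm]
lemma symm (hfg : DynEquiv f g) : DynEquiv g f := by
  obtain ⟨σ, hσ⟩ := hfg
  refine ⟨σ.symm, fun x => ?_⟩
  rw [Equiv.symm_symm, ← Equiv.eq_symm_apply, ← hσ, σ.apply_symm_apply]

@[trans]
lemma trans (hfg : DynEquiv f g) (hgh : DynEquiv g h) : DynEquiv f h := by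
  obtain ⟨σ, hσ⟩ := hfg
  obtain ⟨τ, hτ⟩ := hgh
  exact ⟨σ.trans τ, fun x => by simp [hτ (σ x), hσ x]⟩

lemma iterate (hfg : DynEquiv f g) (n : ℕ) : DynEquiv f^[n] g^[n] := by
  obtain ⟨σ, hσ⟩ := hfg
  refine ⟨σ, fun x => ?_⟩
  induction n generalizing x with
  | zero => simp
  | succ n ih => rw [iterate_succ_apply, iterate_succ_apply, ← ih, ← hσ, σ.apply_symm_apply]

lemma eq_id_iff (hfg : DynEquiv f g) : f = id ↔ g = id := by
  obtain ⟨σ, hσ⟩ := hfg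
  constructor <;> rintro rfl <;> funext x
  · simpa using congrArg σ (hσ (σ.symm x))
  · simpa using (hσ x).symm

end DynEquiv

noncomputable def dynOrder {α : Type*} (f : α → α) : ℕ := orderOf (G := Function.End α) f

section dynOrder

variable {α : Type*} {f g : α → α}

lemma dynOrder_dvd_iff {n : ℕ} : dynOrder f ∣ n ↔ f^[n] = id := orderOf_dvd_iff_pow_eq_one

lemma dynOrder_eq_iff {d : ℕ} : dynOrder f = d ↔ ∀ n, f^[n] = id ↔ d ∣ n := by
  simp only [← dynOrder_dvd_iff]
  exact Nat.dvd_right_iff_eq.symm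

lemma DynEquiv.dynOrder_eq (hfg : DynEquiv f g) : dynOrder f = dynOrder g :=
  dynOrder_eq_iff.2 fun n => ((hfg.iterate n).eq_id_iff).trans dynOrder_dvd_iff.symm

lemma dynOrder_mul_left {M : Type*} [Monoid M] (a : M) : dynOrder (a * ·) = orderOf a := by
  refine dynOrder_eq_iff.2 fun n => ?_
  rw [mul_left_iterate, orderOf_dvd_iff_pow_eq_one]
  refine ⟨fun h => by simpa using congrFun h 1, fun h => funext fun x => by simp [h]⟩

lemma dynOrder_add_right {R : Type*} [Ring R] [NoZeroDivisors R] {b : R} (hb : b ≠ 0) :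
    dynOrder (· + b) = ringChar R := by
  refine dynOrder_eq_iff.2 fun n => ?_
  have hnb : n • b = 0 ↔ ringChar R ∣ n := by simp [nsmul_eq_mul, hb, ← ringChar.spec]
  rw [add_right_iterate, ← hnb]
  exact ⟨fun h => by simpa using congrFun h 0, fun h => funext fun x => by simp [h]⟩

end dynOrder

lemma numDynClasses_eq_card_image {α β : Type*} {S : Set (α → α)} (φ : (α → α) → β)
    (hφ : ∀ f ∈ S, ∀ g ∈ S, DynEquiv f g ↔ φ f = φ g) :
    numDynClasses S = Nat.card (φ '' S) := by
  refine Nat.card_eq_of_bijective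
    (Quot.lift (fun f : S => (⟨φ f, f, f.2, rfl⟩ : φ '' S))
      fun f g hfg => Subtype.ext ((hφ f f.2 g g.2).1 hfg)) ⟨?_, ?_⟩
  · rintro ⟨f⟩ ⟨g⟩ hfg
    exact Quot.sound ((hφ f f.2 g g.2).2 (congrArg Subtype.val hfg))
  · rintro ⟨_, f, hf, rfl⟩
    exact ⟨Quot.mk _ ⟨f, hf⟩, rfl⟩

lemma Nat.exists_coprime_modEq_of_coprime {i d n : ℕ} (hn : n ≠ 0) (hdn : d ∣ n)
    (hi : i.Coprime d) : ∃ k, 0 < k ∧ k.Coprime n ∧ k ≡ i [MOD d] := by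
  have : NeZero n := ⟨hn⟩
  obtain ⟨v, hv⟩ := ZMod.unitsMap_surjective hdn (ZMod.unitOfCoprime i hi)
  have hvi : ((v : ZMod n).val : ZMod d) = i := by
    rw [ZMod.natCast_val, ← ZMod.unitsMap_val hdn, hv, ZMod.coe_unitOfCoprime]
  refine ⟨(v : ZMod n).val + n, by omega,
    Nat.coprime_add_self_left.2 (ZMod.val_coe_unit_coprime v), ?_⟩
  exact ((Nat.modEq_zero_iff_dvd.2 hdn).add_left _).trans
    ((ZMod.natCast_eq_natCast_iff _ _ _).1 hvi)

lemma IsCyclic.exists_orderOf_eq_of_dvd {G : Type*} [Group G] [IsCyclic G] [Finite G] {d : ℕ}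
    (hd : d ∣ Nat.card G) : ∃ a : G, orderOf a = d := by
  obtain ⟨g, hg⟩ := IsCyclic.exists_ofOrder_eq_natCard (α := G)
  exact ⟨g ^ (orderOf g / d), orderOf_pow_orderOf_div (hg ▸ Nat.card_pos.ne') (hg ▸ hd)⟩

section Field

variable {F : Type*} [Field F]

lemma dynEquiv_mul_left_mul_add {a b : F} (h : a = 1 → b = 0) :
    DynEquiv (fun x => a * x) (fun x => a * x + b) := by
  rcases eq_or_ne a 1 with rfl | ha
  · simp only [h rfl, add_zero]
    exact .refl _
  refine ⟨Equiv.addRight (b / (1 - a)), fun x => ?_⟩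
  have : 1 - a ≠ 0 := sub_ne_zero.2 ha.symm
  simp only [Equiv.addRight_symm_apply, Equiv.coe_addRight]
  field_simp
  ring

lemma dynEquiv_add_right {b b' : F} (hb : b ≠ 0) (hb' : b' ≠ 0) :
    DynEquiv (· + b) (· + b') :=
  ⟨Equiv.mulLeft₀ (b' / b) (div_ne_zero hb' hb), fun x => by simp; field_simp⟩

open scoped Classical in
lemma dynOrder_mul_add (a : Fˣ) (b : F) :
    dynOrder (fun x => (a : F) * x + b) =
      if (a : F) = 1 ∧ b ≠ 0 then ringChar F else orderOf a := by
  split_ifs with hab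
  · simp only [hab.1, one_mul]
    exact dynOrder_add_right hab.2
  · rw [← (dynEquiv_mul_left_mul_add (by tauto)).dynOrder_eq, dynOrder_mul_left, orderOf_units]

variable [Fintype F]

lemma FiniteField.ringChar_not_dvd_card_sub_one : ¬ ringChar F ∣ Fintype.card F - 1 := by
  rw [← ringChar.spec, Nat.cast_sub Fintype.card_pos, cast_card_eq_zero]
  simp

lemma FiniteField.orderOf_dvd_card_sub_one (a : Fˣ) : orderOf a ∣ Fintype.card F - 1 := by
  rw [← Nat.card_eq_fintype_card, ← Nat.card_units]
  exact orderOf_dvd_natCard a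

lemma FiniteField.pow_injective_of_coprime {k : ℕ} (hk : 0 < k)
    (hcop : k.Coprime (Fintype.card F - 1)) :
    Injective fun x : F => x ^ k := by
  have hunits : Injective fun u : Fˣ => u ^ k := by
    refine (Nat.Coprime.pow_left_bijective ?_).injective
    rwa [Nat.card_units, Nat.card_eq_fintype_card, Nat.coprime_comm]
  intro x y hxy
  simp only at hxy
  rcases eq_or_ne x 0 with rfl | hx
  · exact (pow_eq_zero_iff hk.ne').1 (hxy.symm.trans (zero_pow hk.ne')) |>.symm
  rcases eq_or_ne y 0 with rfl | hy
  · exact (pow_eq_zero_iff hk.ne').1 (hxy.trans (zero_pow hk.ne'))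
  simpa using congrArg Units.val (hunits (a₁ := Units.mk0 x hx) (a₂ := Units.mk0 y hy)
    (Units.ext (by simpa using hxy)))

lemma FiniteField.exists_pow_eq_of_orderOf_eq {a a' : Fˣ} (h : orderOf a = orderOf a') :
    ∃ k, 0 < k ∧ k.Coprime (Fintype.card F - 1) ∧ a ^ k = a' := by
  have : NeZero (orderOf a) := ⟨(orderOf_pos a).ne'⟩
  have ha : IsPrimitiveRoot (a : F) (orderOf a) := by
    simpa only [orderOf_units] using IsPrimitiveRoot.orderOf (a : F)
  have ha' : IsPrimitiveRoot (a' : F) (orderOf a) := by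
    simpa only [h, orderOf_units] using IsPrimitiveRoot.orderOf (a' : F)
  obtain ⟨i, -, hi⟩ := ha.eq_pow_of_pow_eq_one ha'.pow_eq_one
  have hicop : i.Coprime (orderOf a) := (ha.pow_iff_coprime (orderOf_pos a) i).1 (hi ▸ ha')
  obtain ⟨k, hk, hkcop, hki⟩ := Nat.exists_coprime_modEq_of_coprime
    (Nat.sub_ne_zero_of_lt Fintype.one_lt_card) (orderOf_dvd_card_sub_one a) hicop
  refine ⟨k, hk, hkcop, Units.ext ?_⟩
  rw [← hi, ← Units.val_pow_eq_pow_val, pow_eq_pow_iff_modEq.2 hki, Units.val_pow_eq_pow_val]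

lemma dynEquiv_mul_left_of_orderOf_eq {a a' : Fˣ} (h : orderOf a = orderOf a') :
    DynEquiv (fun x : F => a * x) (fun x : F => a' * x) := by
  obtain ⟨k, hk, hkcop, rfl⟩ := FiniteField.exists_pow_eq_of_orderOf_eq h
  have hσ := (FiniteField.pow_injective_of_coprime hk hkcop).bijective_of_finite
  refine ⟨Equiv.ofBijective _ hσ, fun x => ?_⟩
  rw [Equiv.symm_apply_eq, Equiv.ofBijective_apply, Equiv.ofBijective_apply, mul_pow,
    Units.val_pow_eq_pow_val]

lemma FiniteField.ringChar_ne_orderOf (a : Fˣ) : ringChar F ≠ orderOf a :=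
  fun h => ringChar_not_dvd_card_sub_one (h ▸ orderOf_dvd_card_sub_one a)

lemma dynEquiv_mul_add_iff {a a' : Fˣ} {b b' : F} :
    DynEquiv (fun x => (a : F) * x + b) (fun x => (a' : F) * x + b') ↔
      dynOrder (fun x => (a : F) * x + b) = dynOrder (fun x => (a' : F) * x + b') := by
  refine ⟨DynEquiv.dynOrder_eq, fun h => ?_⟩
  rw [dynOrder_mul_add, dynOrder_mul_add] at h
  split_ifs at h with hab hab'
  · simp only [hab.1, hab'.1, one_mul]
    exact dynEquiv_add_right hab.2 hab'.2
  · exact absurd h (FiniteField.ringChar_ne_orderOf a')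
  · exact absurd h.symm (FiniteField.ringChar_ne_orderOf a)
  · exact (dynEquiv_mul_left_mul_add (by tauto)).symm.trans
      ((dynEquiv_mul_left_of_orderOf_eq h).trans (dynEquiv_mul_left_mul_add (by tauto)))

lemma dynOrder_image_mul_add :
    dynOrder '' {f : F → F | ∃ (a : Fˣ) (b : F), f = fun x => (a : F) * x + b} =
      ↑(insert (ringChar F) (Fintype.card F - 1).divisors) := by
  have hq : Fintype.card F - 1 ≠ 0 := Nat.sub_ne_zero_of_lt Fintype.one_lt_card
  ext n
  simp only [Set.mem_image, Set.mem_ofPred_eq, Finset.coe_insert, Set.mem_insert_iff,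
    Finset.mem_coe, Nat.mem_divisors]
  constructor
  · rintro ⟨_, ⟨a, b, rfl⟩, rfl⟩
    rw [dynOrder_mul_add]
    split_ifs
    · exact .inl rfl
    · exact .inr ⟨FiniteField.orderOf_dvd_card_sub_one a, hq⟩
  · rintro (rfl | ⟨hn, -⟩)
    · exact ⟨_, ⟨1, 1, rfl⟩, by rw [dynOrder_mul_add]; simp⟩
    · rw [← Nat.card_eq_fintype_card, ← Nat.card_units] at hn
      obtain ⟨a, rfl⟩ := IsCyclic.exists_orderOf_eq_of_dvd hn
      exact ⟨_, ⟨a, 0, rfl⟩, by rw [dynOrder_mul_add]; simp⟩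

end Field

theorem stmt6 {F : Type*} [Field F] [Fintype F] (q : ℕ) (hq : Fintype.card F = q) :
    numDynClasses {f : F → F | ∃ (a : Fˣ) (b : F), f = fun x => (a : F) * x + b} =
      (q - 1).divisors.card + 1 := by
  subst hq
  rw [numDynClasses_eq_card_image dynOrder ?_, dynOrder_image_mul_add, Nat.card_coe_set_eq,
    Set.ncard_coe_finset, Finset.card_insert_of_notMem]
  · exact fun h => FiniteField.ringChar_not_dvd_card_sub_one (Nat.dvd_of_mem_divisors h)
  · rintro _ ⟨a, b, rfl⟩ _ ⟨a', b', rfl⟩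
    exact dynEquiv_mul_add_iff
end

section
/- Let q = p^k with p prime and k ≥ 1. The number of dynamical-equivalence classes among the maps F_q → F_q of the form x ↦ a x^p + b, where a ∈ F_q^*, b ∈ F_q, and the norm Nm_{F_q/F_p}(a) = 1, is exactly 2; moreover, two such maps are dynamically equivalent if and only if either both or neither have a fixed point in F_q. -/
/-- The norm from `F_q` to `F_p` (with `q = p^k`): `x ↦ x^(1 + p + ⋯ + p^(k-1))`. -/
def fieldNorm {F : Type*} [Field F] (p k : ℕ) (x : F) : F :=
  x ^ (∑ i ∈ Finset.range k, p ^ i)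

open Function

section DynEquiv

variable {α : Type*} {f g : α → α}

theorem dynEquiv_iff_exists_semiconj : DynEquiv f g ↔ ∃ σ : Equiv.Perm α, Semiconj σ f g :=
  exists_congr fun σ => forall_congr' fun _ => σ.symm_apply_eq.trans eq_comm

theorem dynEquiv_equivalence : Equivalence (@DynEquiv α) where
  refl _ := dynEquiv_iff_exists_semiconj.mpr ⟨Equiv.refl α, Semiconj.id_left⟩
  symm h := by
    obtain ⟨σ, hσ⟩ := dynEquiv_iff_exists_semiconj.mp h
    exact dynEquiv_iff_exists_semiconj.mpr
      ⟨σ.symm, hσ.inverse_left σ.left_inv σ.right_inv⟩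
  trans h h' := by
    obtain ⟨σ, hσ⟩ := dynEquiv_iff_exists_semiconj.mp h
    obtain ⟨τ, hτ⟩ := dynEquiv_iff_exists_semiconj.mp h'
    exact dynEquiv_iff_exists_semiconj.mpr ⟨σ.trans τ, hσ.trans hτ⟩

theorem DynEquiv.exists_isFixedPt (h : DynEquiv f g) (hf : ∃ x, IsFixedPt f x) :
    ∃ x, IsFixedPt g x := by
  obtain ⟨σ, hσ⟩ := dynEquiv_iff_exists_semiconj.mp h
  obtain ⟨x, hx⟩ := hf
  exact ⟨σ x, hx.map hσ⟩

theorem DynEquiv.exists_isFixedPt_iff (h : DynEquiv f g) :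
    (∃ x, IsFixedPt f x) ↔ ∃ x, IsFixedPt g x :=
  ⟨h.exists_isFixedPt, (dynEquiv_equivalence.symm h).exists_isFixedPt⟩

end DynEquiv

theorem Nat.card_quot_of_surjective {α β : Type*} {r : α → α → Prop} {φ : α → β}
    (hφ : Surjective φ) (hr : ∀ x y, r x y ↔ φ x = φ y) : Nat.card (Quot r) = Nat.card β := by
  obtain rfl : r = (Setoid.ker φ).r := funext₂ fun x y => propext (hr x y)
  exact Nat.card_congr (Setoid.quotientKerEquivOfSurjective φ hφ)

theorem IsCyclic.range_powMonoidHom_eq_ker {G : Type*} [CommGroup G] [IsCyclic G] [Finite G]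
    {d : ℕ} (hd : d ∣ Nat.card G) :
    (powMonoidHom d : G →* G).range = (powMonoidHom (Nat.card G / d)).ker := by
  refine Subgroup.eq_of_le_of_card_ge ?_ ?_
  · rintro _ ⟨x, rfl⟩
    simp [← pow_mul, Nat.mul_div_cancel' hd, pow_card_eq_one']
  · rw [IsCyclic.card_powMonoidHom_range, IsCyclic.card_powMonoidHom_ker, Nat.gcd_eq_right hd,
      Nat.gcd_eq_right (Nat.div_dvd_of_dvd hd)]

theorem exists_pow_sub_one_eq_of_fieldNorm_eq_one {F : Type*} [Field F] [Fintype F] {p k : ℕ}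
    [hp : Fact p.Prime] (hq : Fintype.card F = p ^ k) {a : Fˣ} (ha : fieldNorm p k (a : F) = 1) :
    ∃ u : Fˣ, u ^ (p - 1) = a := by
  have hcard : Nat.card Fˣ = (∑ i ∈ Finset.range k, p ^ i) * (p - 1) := by
    rw [Nat.card_units, Nat.card_eq_fintype_card, hq, geom_sum_mul_of_one_le hp.out.one_le]
  have hker : a ∈ (powMonoidHom (Nat.card Fˣ / (p - 1)) : Fˣ →* Fˣ).ker := by
    rw [hcard, Nat.mul_div_cancel _ (Nat.sub_pos_of_lt hp.out.one_lt), MonoidHom.mem_ker,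
      powMonoidHom_apply, Units.ext_iff]
    simpa [fieldNorm] using ha
  exact (IsCyclic.range_powMonoidHom_eq_ker (hcard ▸ dvd_mul_left _ _)).ge hker

section ArtinSchreier

variable (F : Type*) (p : ℕ)

def artinSchreier [CommRing F] [ExpChar F p] : F →+ F :=
  (frobenius F p).toAddMonoidHom - AddMonoidHom.id F

variable {F p}

@[simp]
theorem artinSchreier_apply [CommRing F] [ExpChar F p] (x : F) :
    artinSchreier F p x = x ^ p - x :=
  rfl

variable [Field F] [Fact p.Prime] [CharP F p]

theorem ker_artinSchreier : (artinSchreier F p).ker = (⊥ : Subfield F).toAddSubgroup := by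
  ext x
  simp [sub_eq_zero, Subfield.mem_bot_iff_pow_eq_self F p]

theorem card_quotient_range_artinSchreier [Finite F] :
    Nat.card (F ⧸ (artinSchreier F p).range) = p := by
  rw [← AddSubgroup.index, AddSubgroup.index_range, ker_artinSchreier]
  exact Subfield.card_bot F p

theorem exists_notMem_range_artinSchreier [Finite F] : ∃ c : F, c ∉ (artinSchreier F p).range := by
  by_contra! h
  have hp1 := (Fact.out : p.Prime).one_lt.ne'
  rw [← card_quotient_range_artinSchreier (F := F), ← AddSubgroup.index, ne_eq,
    AddSubgroup.index_eq_one] at hp1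
  exact hp1 ((AddSubgroup.eq_top_iff' _).mpr h)

end ArtinSchreier

section frobAffine

variable {F : Type*} [Field F] {p : ℕ}

def frobAffine (p : ℕ) (a b x : F) : F := a * x ^ p + b

/-- Conjugation by `x ↦ u * x + v`. -/
theorem frobAffine_dynEquiv_of_eq [ExpChar F p] {a b a' b' u v : F} (hu : u ≠ 0)
    (ha : a' * u ^ p = a * u) (hb : u * b - b' = a' * v ^ p - v) :
    DynEquiv (frobAffine p a b) (frobAffine p a' b') := by
  refine dynEquiv_iff_exists_semiconj.mpr ⟨(Equiv.mulLeft₀ u hu).trans (Equiv.addRight v),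
    fun x => ?_⟩
  simp only [Equiv.trans_apply, Equiv.mulLeft₀_apply, Equiv.coe_addRight, frobAffine,
    add_pow_expChar, mul_pow]
  linear_combination hb - x ^ p * ha

theorem frobAffine_dynEquiv_frobAffine_one [ExpChar F p] {a u : F} (hu : u ≠ 0)
    (ha : u ^ (p - 1) = a) (b : F) : DynEquiv (frobAffine p a b) (frobAffine p 1 (u * b)) :=
  have hp : p ≠ 0 := (expChar_pos F p).ne'
  frobAffine_dynEquiv_of_eq (v := 0) hu (by rw [one_mul, ← ha, pow_sub_one_mul hp])
    (by simp [zero_pow hp])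

variable [Fact p.Prime] [CharP F p]

theorem exists_isFixedPt_frobAffine_one_iff {c : F} :
    (∃ x, IsFixedPt (frobAffine p 1 c) x) ↔ c ∈ (artinSchreier F p).range := by
  rw [← AddSubgroup.neg_mem_iff]
  refine exists_congr fun x => ?_
  simp only [IsFixedPt, frobAffine, one_mul, artinSchreier_apply]
  constructor <;> intro h <;> linear_combination h

theorem frobAffine_one_dynEquiv_of_mem_range_iff [Finite F] {c c' : F}
    (h : c ∈ (artinSchreier F p).range ↔ c' ∈ (artinSchreier F p).range) :
    DynEquiv (frobAffine p 1 c) (frobAffine p 1 c') := by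
  set R := (artinSchreier F p).range
  suffices ∃ u : F, u ≠ 0 ∧ u ^ p = u ∧ u * c - c' ∈ R by
    obtain ⟨u, hu0, hup, v, hv⟩ := this
    exact frobAffine_dynEquiv_of_eq hu0 (by rw [one_mul, hup, one_mul]) (by simpa using hv.symm)
  by_cases hc : c ∈ R
  · exact ⟨1, one_ne_zero, one_pow p, by simpa using R.sub_mem hc (h.mp hc)⟩
  have hc0 : (c : F ⧸ R) ≠ 0 := by rwa [ne_eq, QuotientAddGroup.eq_zero_iff]
  obtain ⟨n, hn⟩ := mem_zmultiples_of_prime_card card_quotient_range_artinSchreier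
    hc0 (g' := (c' : F ⧸ R))
  have hsub : (n : F) * c - c' ∈ R := by
    rw [← QuotientAddGroup.eq_iff_sub_mem, ← zsmul_eq_mul, QuotientAddGroup.mk_zsmul]
    exact hn
  refine ⟨n, fun hn0 => ?_, map_intCast (frobenius F p) n, hsub⟩
  rw [hn0, zero_mul, zero_sub, AddSubgroup.neg_mem_iff] at hsub
  exact hc (h.mpr hsub)

theorem frobAffine_dynEquiv_iff [Fintype F] {k : ℕ} (hq : Fintype.card F = p ^ k) {a a' : Fˣ}
    {b b' : F} (ha : fieldNorm p k (a : F) = 1) (ha' : fieldNorm p k (a' : F) = 1) :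
    DynEquiv (frobAffine p (a : F) b) (frobAffine p (a' : F) b') ↔
      ((∃ x, IsFixedPt (frobAffine p (a : F) b) x) ↔
        ∃ x, IsFixedPt (frobAffine p (a' : F) b') x) := by
  refine ⟨DynEquiv.exists_isFixedPt_iff, fun hfix => ?_⟩
  obtain ⟨u, rfl⟩ := exists_pow_sub_one_eq_of_fieldNorm_eq_one hq ha
  obtain ⟨u', rfl⟩ := exists_pow_sub_one_eq_of_fieldNorm_eq_one hq ha'
  have e := frobAffine_dynEquiv_frobAffine_one (p := p) u.ne_zero (u.val_pow_eq_pow_val _).symm b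
  have e' :=
    frobAffine_dynEquiv_frobAffine_one (p := p) u'.ne_zero (u'.val_pow_eq_pow_val _).symm b'
  refine dynEquiv_equivalence.trans e
    (dynEquiv_equivalence.trans ?_ (dynEquiv_equivalence.symm e'))
  apply frobAffine_one_dynEquiv_of_mem_range_iff
  rwa [← exists_isFixedPt_frobAffine_one_iff, ← exists_isFixedPt_frobAffine_one_iff,
    ← e.exists_isFixedPt_iff, ← e'.exists_isFixedPt_iff]

end frobAffine

theorem stmt8_general {F : Type*} [Field F] [Fintype F] (p k : ℕ) [Fact p.Prime]
    (hq : Fintype.card F = p ^ k) :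
    numDynClasses {f : F → F | ∃ (a : Fˣ) (b : F), fieldNorm p k (a : F) = 1 ∧
        f = fun x => (a : F) * x ^ p + b} = 2 ∧
    ∀ (a a' : Fˣ) (b b' : F), fieldNorm p k (a : F) = 1 → fieldNorm p k (a' : F) = 1 →
      (DynEquiv (fun x : F => (a : F) * x ^ p + b) (fun x : F => (a' : F) * x ^ p + b') ↔
        ((∃ x : F, (a : F) * x ^ p + b = x) ↔ (∃ x : F, (a' : F) * x ^ p + b' = x))) := by
  have : CharP F p := charP_of_card_eq_prime_pow hq
  refine ⟨?_, fun a a' b b' => frobAffine_dynEquiv_iff hq⟩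
  obtain ⟨c₀, hc₀⟩ := exists_notMem_range_artinSchreier (F := F) (p := p)
  refine (Nat.card_quot_of_surjective (φ := fun f => ∃ x, IsFixedPt f.1 x) ?_ ?_).trans
    (Nat.card_eq_fintype_card.trans Fintype.card_prop)
  · intro P
    obtain ⟨c, hc⟩ : ∃ c : F, (c ∈ (artinSchreier F p).range ↔ P) := by
      by_cases hP : P
      · exact ⟨0, iff_of_true (zero_mem _) hP⟩
      · exact ⟨c₀, iff_of_false hc₀ hP⟩
    refine ⟨⟨frobAffine p ((1 : Fˣ) : F) c, 1, c, one_pow _, rfl⟩, ?_⟩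
    simpa only [Units.val_one, exists_isFixedPt_frobAffine_one_iff, eq_iff_iff] using hc
  · rintro ⟨_, a, b, ha, rfl⟩ ⟨_, a', b', ha', rfl⟩
    exact (frobAffine_dynEquiv_iff hq ha ha').trans eq_iff_iff.symm

theorem stmt8 {F : Type*} [Field F] [Fintype F] (p k : ℕ) [Fact p.Prime] (hk : 1 ≤ k)
    (hq : Fintype.card F = p ^ k) :
    numDynClasses {f : F → F | ∃ (a : Fˣ) (b : F), fieldNorm p k (a : F) = 1 ∧
        f = fun x => (a : F) * x ^ p + b} = 2 ∧
    ∀ (a a' : Fˣ) (b b' : F), fieldNorm p k (a : F) = 1 → fieldNorm p k (a' : F) = 1 →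
      (DynEquiv (fun x : F => (a : F) * x ^ p + b) (fun x : F => (a' : F) * x ^ p + b') ↔
        ((∃ x : F, (a : F) * x ^ p + b = x) ↔ (∃ x : F, (a' : F) * x ^ p + b' = x))) :=
  stmt8_general p k hq
end

section
/- Let q = p^k with p prime and k ≥ 1. The number of dynamical-equivalence classes among the maps F_q → F_q of the form x ↦ a x^p + b, where a ∈ F_q^*, b ∈ F_q, and Nm_{F_q/F_p}(a) ≠ 1, is exactly τ(p − 1) − 1, where τ(n) is the number of positive divisors of n. -/
namespace Stmt13Aux

open Finset

/-! ### Generalities about `DynEquiv` -/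

lemma dynEquiv_of_comm {α : Type*} {f g : α → α} (σ : Equiv.Perm α)
    (h : ∀ x, σ (f x) = g (σ x)) : DynEquiv f g :=
  ⟨σ, fun x => by rw [← h x, Equiv.symm_apply_apply]⟩

lemma dynEquiv_refl {α : Type*} (f : α → α) : DynEquiv f f :=
  dynEquiv_of_comm (Equiv.refl α) (fun _ => rfl)

lemma dynEquiv_symm {α : Type*} {f g : α → α} (h : DynEquiv f g) : DynEquiv g f := by
  obtain ⟨σ, h⟩ := h
  refine ⟨σ.symm, fun x => ?_⟩
  simp only [Equiv.symm_symm]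
  rw [← h (σ.symm x), Equiv.apply_symm_apply, Equiv.apply_symm_apply]

lemma dynEquiv_trans {α : Type*} {f g h : α → α} (h1 : DynEquiv f g) (h2 : DynEquiv g h) :
    DynEquiv f h := by
  obtain ⟨σ, hσ⟩ := h1; obtain ⟨τ, hτ⟩ := h2
  refine ⟨σ.trans τ, fun x => ?_⟩
  simp only [Equiv.trans_apply, Equiv.symm_trans_apply]
  rw [hτ (σ x), hσ x]

lemma dynEquiv_iterate {α : Type*} {f g : α → α} (h : DynEquiv f g) (n : ℕ) :
    (f^[n] = id) ↔ (g^[n] = id) := by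
  obtain ⟨σ, h⟩ := h
  have key : ∀ n x, f^[n] x = σ.symm (g^[n] (σ x)) := by
    intro n
    induction n with
    | zero => intro x; simp
    | succ n ih =>
      intro x
      rw [Function.iterate_succ_apply, Function.iterate_succ_apply, ih (f x), ← h x,
        Equiv.apply_symm_apply]
  constructor
  · intro hf
    funext y
    have h1 := congrFun hf (σ.symm y)
    rw [key n (σ.symm y), Equiv.apply_symm_apply] at h1
    simpa using congrArg σ h1
  · intro hg
    funext x
    rw [key n x, hg]
    simp

/-- the invariant: least positive `n` with `f^[n] = id`. -/
noncomputable def phi {α : Type*} (f : α → α) : ℕ := sInf {n | 0 < n ∧ f^[n] = id}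

lemma phi_eq_of_dynEquiv {α : Type*} {f g : α → α} (h : DynEquiv f g) : phi f = phi g := by
  unfold phi
  congr 1
  ext n
  exact and_congr_right (fun _ => dynEquiv_iterate h n)

lemma phi_eq_of_forall_dvd {α : Type*} {f : α → α} {c : ℕ} (hc : 0 < c)
    (h : ∀ n, f^[n] = id ↔ c ∣ n) : phi f = c := by
  have hset : {n | 0 < n ∧ f^[n] = id} = {n | 0 < n ∧ c ∣ n} := by
    ext n; exact and_congr_right (fun _ => h n)
  unfold phi
  rw [hset]
  have hmem : c ∈ {n | 0 < n ∧ c ∣ n} := ⟨hc, dvd_rfl⟩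
  refine le_antisymm (Nat.sInf_le hmem) ?_
  have := Nat.sInf_mem (⟨c, hmem⟩ : {n | 0 < n ∧ c ∣ n}.Nonempty)
  exact Nat.le_of_dvd this.1 this.2

/-! ### Numeric helpers -/

lemma geom_mul {p : ℕ} (hp : 1 ≤ p) (n : ℕ) :
    (∑ i ∈ Finset.range n, p ^ i) * (p - 1) + 1 = p ^ n := by
  obtain ⟨c, rfl⟩ : ∃ c, p = c + 1 := ⟨p - 1, by omega⟩
  induction n with
  | zero => simp
  | succ n ih =>
    rw [geom_sum_succ, pow_succ, ← ih]
    simp only [Nat.add_sub_cancel]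
    ring

lemma dvd_of_pow_sub_one_dvd {p : ℕ} (hp : 2 ≤ p) {k n : ℕ} (hk : 1 ≤ k)
    (h : p ^ k - 1 ∣ p ^ n - 1) : k ∣ n := by
  have hpk : 2 ≤ p ^ k := by
    calc 2 ≤ p := hp
    _ = p ^ 1 := (pow_one p).symm
    _ ≤ p ^ k := Nat.pow_le_pow_right (by omega) hk
  have h1 : p ^ k ≡ 1 [MOD p ^ k - 1] := by
    have := (Nat.modEq_iff_dvd' (by omega : 1 ≤ p ^ k)).mpr dvd_rfl
    exact this.symm
  set r := n % k with hr
  have hnr : p ^ n ≡ p ^ r [MOD p ^ k - 1] := by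
    conv_lhs => rw [← Nat.div_add_mod n k]
    rw [pow_add, pow_mul]
    calc (p ^ k) ^ (n / k) * p ^ r ≡ 1 ^ (n / k) * p ^ r [MOD p ^ k - 1] :=
          Nat.ModEq.mul_right _ (h1.pow _)
      _ = p ^ r := by rw [one_pow, one_mul]
  have hn1 : p ^ n ≡ 1 [MOD p ^ k - 1] := by
    have : 1 ≤ p ^ n := Nat.one_le_pow _ _ (by omega)
    exact ((Nat.modEq_iff_dvd' this).mpr h).symm
  have hr1 : p ^ k - 1 ∣ p ^ r - 1 := by
    have := (hnr.symm.trans hn1)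
    exact (Nat.modEq_iff_dvd' (Nat.one_le_pow _ _ (by omega))).mp this.symm
  have hrk : r < k := Nat.mod_lt _ (by omega)
  have hlt : p ^ r - 1 < p ^ k - 1 := by
    have : p ^ r < p ^ k := Nat.pow_lt_pow_right (by omega) hrk
    omega
  have hzero : p ^ r - 1 = 0 := by
    by_contra hne
    have := Nat.le_of_dvd (Nat.pos_of_ne_zero hne) hr1
    omega
  have : p ^ r = 1 := by
    have : 1 ≤ p ^ r := Nat.one_le_pow _ _ (by omega)
    omega
  have : r = 0 := by
    by_contra hne
    have : p ≤ p ^ r := by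
      calc p = p ^ 1 := (pow_one p).symm
      _ ≤ p ^ r := Nat.pow_le_pow_right (by omega) (by omega)
    omega
  exact Nat.dvd_of_mod_eq_zero (by omega)

lemma lift_coprime {m N : ℕ} (hmN : m ∣ N) (hN : N ≠ 0) {t : ℕ} (ht : t.Coprime m) :
    ∃ t', 0 < t' ∧ t'.Coprime N ∧ t' ≡ t [MOD m] := by
  haveI : NeZero N := ⟨hN⟩
  obtain ⟨W, hW⟩ := ZMod.unitsMap_surjective hmN (ZMod.unitOfCoprime t ht)
  refine ⟨(W : ZMod N).val + N, by positivity, ?_, ?_⟩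
  · exact Nat.coprime_add_self_left.mpr (ZMod.val_coe_unit_coprime W)
  · have h1 : (((W : ZMod N).val + N : ℕ) : ZMod m) = ((t : ℕ) : ZMod m) := by
      push_cast
      rw [(ZMod.natCast_eq_zero_iff N m).mpr hmN, add_zero]
      have h2 : (((W : ZMod N).val : ℕ) : ZMod m) = ZMod.castHom hmN (ZMod m) (W : ZMod N) := by
        rw [ZMod.natCast_val, ZMod.castHom_apply]
      rw [h2]
      have h3 : (ZMod.unitsMap hmN W : ZMod m) = (ZMod.unitOfCoprime t ht : ZMod m) := by
        rw [hW]
      rw [ZMod.unitsMap_def] at h3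
      simpa [ZMod.coe_unitOfCoprime] using h3
    exact (ZMod.natCast_eq_natCast_iff _ _ _).mp h1

section FieldPart

variable {F : Type*} [Field F] [Fintype F] {p k : ℕ} [Fact p.Prime]


lemma charP_of_card (hk : 1 ≤ k) (hq : Fintype.card F = p ^ k) : CharP F p := by
  have hr : CharP F (ringChar F) := ringChar.charP F
  have hrp : (ringChar F).Prime := CharP.char_is_prime F (ringChar F)
  obtain ⟨n, hn⟩ := FiniteField.card F (ringChar F)
  have hpn : p ^ k = ringChar F ^ (n : ℕ) := by rw [← hq, hn.2]
  have hp : p.Prime := Fact.out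
  have : p ∣ ringChar F ^ (n : ℕ) := hpn ▸ dvd_pow_self p (by omega)
  have : p = ringChar F := (Nat.prime_dvd_prime_iff_eq hp hrp).mp (hp.dvd_of_dvd_pow this)
  rwa [this]

lemma pow_q (hq : Fintype.card F = p ^ k) (x : F) : x ^ p ^ k = x := by rw [← hq]; exact FiniteField.pow_card x

/-- iterate formula for `x ↦ a x^p` -/
lemma iter_pow (a : F) (n : ℕ) :
    (fun x : F => a * x ^ p)^[n] = fun x => a ^ (∑ i ∈ range n, p ^ i) * x ^ (p ^ n) := by
  induction n with
  | zero => funext x; simp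
  | succ n ih =>
    funext x
    rw [Function.iterate_succ_apply, ih]
    simp only
    rw [geom_sum_succ', pow_succ', mul_pow, ← pow_mul, pow_add]
    ring

lemma iter_mul (c : F) (n : ℕ) : (fun x : F => c * x)^[n] = fun x => c ^ n * x := by
  induction n with
  | zero => funext x; simp
  | succ n ih =>
    funext x
    rw [Function.iterate_succ_apply, ih]
    simp only [pow_succ]
    ring

/-- the `k`-th iterate is multiplication by the norm -/
lemma iter_k (hq : Fintype.card F = p ^ k) (a : F) :
    (fun x : F => a * x ^ p)^[k] = fun x => a ^ (∑ i ∈ range k, p ^ i) * x := by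
  rw [iter_pow]
  funext x
  rw [pow_q hq]

lemma iter_eq_id_iff (hk : 1 ≤ k) (hq : Fintype.card F = p ^ k) (a : Fˣ) (n : ℕ) :
    ((fun x : F => ↑a * x ^ p)^[n] = id) ↔
      k * orderOf (a ^ (∑ i ∈ range k, p ^ i)) ∣ n := by
  classical
  have hp : p.Prime := Fact.out
  have hp2 : 2 ≤ p := hp.two_le
  obtain ⟨γ, hγ⟩ := IsCyclic.exists_generator (α := Fˣ)
  have hcard : Nat.card Fˣ = p ^ k - 1 := by
    rw [Nat.card_eq_fintype_card, Fintype.card_units, hq]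
  have hγord : orderOf γ = p ^ k - 1 := by
    rw [orderOf_eq_card_of_forall_mem_zpowers hγ, hcard]
  constructor
  · intro h
    rcases Nat.eq_zero_or_pos n with rfl | hn
    · exact dvd_zero _
    have hform := iter_pow (p := p) (a := (a : F)) n
    rw [h] at hform
    have hx : ∀ x : F, (a : F) ^ (∑ i ∈ range n, p ^ i) * x ^ p ^ n = x := by
      intro x; exact (congrFun hform x).symm
    have h1 : (a : F) ^ (∑ i ∈ range n, p ^ i) = 1 := by
      have := hx 1; simpa using this
    have hxx : ∀ x : F, x ^ p ^ n = x := by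
      intro x; have := hx x; rwa [h1, one_mul] at this
    -- k ∣ n
    have hγn : γ ^ p ^ n = γ ^ 1 := by
      refine Units.ext ?_
      push_cast
      simpa using hxx (γ : F)
    have hmod : p ^ n ≡ 1 [MOD p ^ k - 1] := by
      rw [← hγord]; exact pow_eq_pow_iff_modEq.mp hγn
    have hdvd : p ^ k - 1 ∣ p ^ n - 1 :=
      (Nat.modEq_iff_dvd' (Nat.one_le_pow _ _ (by omega))).mp hmod.symm
    have hkn : k ∣ n := dvd_of_pow_sub_one_dvd hp2 hk hdvd
    obtain ⟨n', rfl⟩ := hkn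
    -- now m ∣ n'
    rw [Function.iterate_mul, iter_k hq, iter_mul] at h
    have h2 : ((a : F) ^ (∑ i ∈ range k, p ^ i)) ^ n' = 1 := by
      have := congrFun h 1
      simpa using this
    have h3 : (a ^ (∑ i ∈ range k, p ^ i)) ^ n' = 1 := by
      refine Units.ext ?_; push_cast; simpa using h2
    exact Nat.mul_dvd_mul_left k (orderOf_dvd_of_pow_eq_one h3)
  · rintro ⟨j, rfl⟩
    set m := orderOf (a ^ (∑ i ∈ range k, p ^ i)) with hm
    have : k * m * j = k * (m * j) := by ring
    rw [this, Function.iterate_mul, iter_k hq, iter_mul]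
    funext x
    have : ((a : F) ^ (∑ i ∈ range k, p ^ i)) ^ (m * j) = 1 := by
      have hu : (a ^ (∑ i ∈ range k, p ^ i)) ^ (m * j) = 1 := by
        rw [pow_mul, pow_orderOf_eq_one, one_pow]
      calc ((a : F) ^ (∑ i ∈ range k, p ^ i)) ^ (m * j)
          = ((a ^ (∑ i ∈ range k, p ^ i)) ^ (m * j) : Fˣ) := by push_cast; ring
        _ = 1 := by rw [hu]; rfl
    rw [this, one_mul]
    rfl

lemma sum_pos_aux (hk : 1 ≤ k) (hp2 : 2 ≤ p) : 0 < ∑ i ∈ range k, p ^ i :=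
  Finset.sum_pos (fun i _ => pow_pos (by omega) i) (nonempty_range_iff.mpr (by omega))

lemma exp_card_aux (hk : 1 ≤ k) (hp2 : 2 ≤ p) (hq : Fintype.card F = p ^ k) :
    (∑ i ∈ range k, p ^ i) * (p - 1) = Fintype.card F - 1 := by
  have := geom_mul (p := p) (by omega) k
  omega

lemma gen_order (hk : 1 ≤ k) (hq : Fintype.card F = p ^ k)
    (γ : Fˣ) (hγ : ∀ x : Fˣ, x ∈ Subgroup.zpowers γ) : orderOf γ = p ^ k - 1 := by
  classical
  rw [orderOf_eq_card_of_forall_mem_zpowers hγ, Nat.card_eq_fintype_card, Fintype.card_units, hq]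

lemma affine_equiv (hk : 1 ≤ k) (hq : Fintype.card F = p ^ k) (a : Fˣ) (b : F)
    (hNm : (a : F) ^ (∑ i ∈ range k, p ^ i) ≠ 1) :
    DynEquiv (fun x : F => ↑a * x ^ p + b) (fun x : F => ↑a * x ^ p) := by
  haveI : CharP F p := charP_of_card hk hq
  have hp2 : 2 ≤ p := (Fact.out : p.Prime).two_le
  have hinj : Function.Injective (fun x : F => (a : F) * x ^ p - x) := by
    intro x y hxy
    by_contra hne
    have hz : x - y ≠ 0 := sub_ne_zero.mpr hne
    simp only at hxy
    have h1 : (a : F) * (x - y) ^ p = x - y := by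
      rw [sub_pow_char]
      linear_combination hxy
    have h2 : ((a : F) * (x - y) ^ (p - 1)) * (x - y) = 1 * (x - y) := by
      rw [one_mul, mul_assoc, ← pow_succ, show p - 1 + 1 = p by omega]
      exact h1
    have h2' := mul_right_cancel₀ hz h2
    have h3 : ((a : F) * (x - y) ^ (p - 1)) ^ (∑ i ∈ range k, p ^ i) = 1 := by
      rw [h2']; exact one_pow _
    rw [mul_pow, ← pow_mul, mul_comm (p - 1) (∑ i ∈ range k, p ^ i), exp_card_aux hk hp2 hq,
      FiniteField.pow_card_sub_one_eq_one _ hz, mul_one] at h3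
    exact hNm h3
  obtain ⟨c, hc⟩ := (Finite.injective_iff_surjective.mp hinj) b
  simp only at hc
  refine dynEquiv_of_comm
    ⟨fun x => x + c, fun x => x - c, fun x => by simp, fun x => by simp⟩ (fun x => ?_)
  simp only [Equiv.coe_fn_mk]
  rw [add_pow_char]
  linear_combination -hc

lemma scale_equiv (a u : Fˣ) :
    DynEquiv (fun x : F => ↑(a * u ^ (p - 1)) * x ^ p) (fun x : F => ↑a * x ^ p) := by
  have hp2 : 2 ≤ p := (Fact.out : p.Prime).two_le
  have hu : ((u : F)) ^ (p - 1) * ↑u = ↑u ^ p := by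
    rw [← pow_succ, show p - 1 + 1 = p by omega]
  refine dynEquiv_of_comm
    ⟨fun x => ↑u * x, fun x => ↑u⁻¹ * x, fun x => by simp, fun x => by simp⟩ (fun x => ?_)
  simp only [Equiv.coe_fn_mk, Units.val_mul, Units.val_pow_eq_pow_val]
  rw [mul_pow, ← hu]
  ring

lemma pow_equiv (a : Fˣ) (t : ℕ) (ht : 0 < t)
    (htc : Nat.Coprime t (Fintype.card F - 1)) :
    DynEquiv (fun x : F => ↑a * x ^ p) (fun x : F => ↑(a ^ t) * x ^ p) := by
  classical
  have hbij : Function.Bijective (fun x : F => x ^ t) := by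
    refine Finite.injective_iff_bijective.mp ?_
    intro x y hxy
    simp only at hxy
    rcases eq_or_ne y 0 with rfl | hy
    · rw [zero_pow ht.ne'] at hxy; exact pow_eq_zero_iff ht.ne' |>.mp hxy
    rcases eq_or_ne x 0 with rfl | hx
    · rw [zero_pow ht.ne'] at hxy
      exact ((hy (pow_eq_zero_iff ht.ne' |>.mp hxy.symm)).elim)
    set X := Units.mk0 x hx with hX
    set Y := Units.mk0 y hy with hY
    have hXY : X ^ t = Y ^ t := by
      refine Units.ext ?_
      push_cast
      simpa [hX, hY] using hxy
    have h1 : (X * Y⁻¹) ^ t = 1 := by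
      rw [mul_pow, hXY, inv_pow]
      simp
    have h2 : orderOf (X * Y⁻¹) ∣ t := orderOf_dvd_of_pow_eq_one h1
    have h3 : orderOf (X * Y⁻¹) ∣ Fintype.card F - 1 := by
      have := orderOf_dvd_natCard (X * Y⁻¹)
      rwa [Nat.card_eq_fintype_card, Fintype.card_units] at this
    have h4 : orderOf (X * Y⁻¹) = 1 := Nat.dvd_one.mp (htc ▸ Nat.dvd_gcd h2 h3)
    have h5 : X = Y := by
      have := orderOf_eq_one_iff.mp h4
      rwa [mul_inv_eq_one] at this
    calc x = (X : F) := rfl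
      _ = (Y : F) := by rw [h5]
      _ = y := rfl
  refine dynEquiv_of_comm (Equiv.ofBijective _ hbij) (fun x => ?_)
  show ((a : F) * x ^ p) ^ t = ↑(a ^ t) * (x ^ t) ^ p
  push_cast
  ring

lemma exists_pow_of_norm_one (hk : 1 ≤ k) (hq : Fintype.card F = p ^ k) (w : Fˣ)
    (hw : w ^ (∑ i ∈ range k, p ^ i) = 1) : ∃ u : Fˣ, u ^ (p - 1) = w := by
  classical
  have hp2 : 2 ≤ p := (Fact.out : p.Prime).two_le
  obtain ⟨γ, hγ⟩ := IsCyclic.exists_generator (α := Fˣ)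
  obtain ⟨s, hs⟩ := (Submonoid.mem_powers_iff _ _).mp (mem_powers_iff_mem_zpowers.mpr (hγ w))
  have hdvd : orderOf γ ∣ s * (∑ i ∈ range k, p ^ i) := by
    apply orderOf_dvd_of_pow_eq_one
    rw [pow_mul, hs, hw]
  rw [gen_order hk hq γ hγ, ← hq, ← exp_card_aux hk hp2 hq] at hdvd
  have hSpos := sum_pos_aux (p := p) (k := k) hk hp2
  have hps : (p - 1) ∣ s := by
    obtain ⟨e, he⟩ := hdvd
    refine ⟨e, ?_⟩
    refine Nat.eq_of_mul_eq_mul_right hSpos ?_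
    rw [he]; ring
  obtain ⟨e, rfl⟩ := hps
  refine ⟨γ ^ e, ?_⟩
  rw [← pow_mul, mul_comm e (p - 1)]
  exact hs

lemma nm_order_dvd (hk : 1 ≤ k) (hq : Fintype.card F = p ^ k) (a : Fˣ) :
    orderOf (a ^ (∑ i ∈ range k, p ^ i)) ∣ p - 1 := by
  classical
  have hp2 : 2 ≤ p := (Fact.out : p.Prime).two_le
  apply orderOf_dvd_of_pow_eq_one
  rw [← pow_mul, exp_card_aux hk hp2 hq, ← Fintype.card_units, ← Nat.card_eq_fintype_card]
  exact pow_card_eq_one'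

lemma pow_sum_eq (γ : Fˣ) (s : ℕ) :
    (γ ^ s) ^ (∑ i ∈ range k, p ^ i) = (γ ^ (∑ i ∈ range k, p ^ i)) ^ s := by
  rw [← pow_mul, ← pow_mul, mul_comm]

lemma equiv_of_order_eq (hk : 1 ≤ k) (hq : Fintype.card F = p ^ k) (a a' : Fˣ)
    (horder : orderOf (a ^ (∑ i ∈ range k, p ^ i)) = orderOf (a' ^ (∑ i ∈ range k, p ^ i))) :
    DynEquiv (fun x : F => ↑a * x ^ p) (fun x : F => ↑a' * x ^ p) := by
  classical
  have hp2 : 2 ≤ p := (Fact.out : p.Prime).two_le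
  have hN1 : 1 ≤ Fintype.card F - 1 := by
    have : 2 ≤ Fintype.card F := Fintype.one_lt_card
    omega
  obtain ⟨γ, hγ⟩ := IsCyclic.exists_generator (α := Fˣ)
  obtain ⟨s, hs⟩ := (Submonoid.mem_powers_iff _ _).mp (mem_powers_iff_mem_zpowers.mpr (hγ a))
  obtain ⟨s', hs'⟩ := (Submonoid.mem_powers_iff _ _).mp (mem_powers_iff_mem_zpowers.mpr (hγ a'))
  set Sk := ∑ i ∈ range k, p ^ i with hSk
  set δ := γ ^ Sk with hδ
  set P := p - 1 with hP
  have hP0 : 0 < P := by omega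
  have hSpos := sum_pos_aux (p := p) (k := k) hk hp2
  have hcardN : Sk * P = Fintype.card F - 1 := exp_card_aux hk hp2 hq
  have hδord : orderOf δ = P := by
    rw [hδ, orderOf_pow, gen_order hk hq γ hγ, ← hq, ← hcardN]
    have hgcd : (Sk * P).gcd Sk = Sk := Nat.gcd_eq_right ⟨P, rfl⟩
    rw [hgcd, Nat.mul_div_cancel_left _ hSpos]
  have haδ : a ^ Sk = δ ^ s := by rw [← hs, hδ]; exact pow_sum_eq γ s
  have haδ' : a' ^ Sk = δ ^ s' := by rw [← hs', hδ]; exact pow_sum_eq γ s'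
  have hod : orderOf (δ ^ s) = P / P.gcd s := by rw [orderOf_pow, hδord]
  have hod' : orderOf (δ ^ s') = P / P.gcd s' := by rw [orderOf_pow, hδord]
  rw [haδ, haδ', hod, hod'] at horder
  set d := P.gcd s with hd
  set d' := P.gcd s' with hd'
  have hdP : d ∣ P := Nat.gcd_dvd_left _ _
  have hd'P : d' ∣ P := Nat.gcd_dvd_left _ _
  have hdd' : d = d' := by
    have h1 : P / (P / d) = d := Nat.div_div_self hdP (by omega)
    have h2 : P / (P / d') = d' := Nat.div_div_self hd'P (by omega)
    rw [← h1, ← h2, horder]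
  set m := P / d with hm
  have hd0 : 0 < d := Nat.gcd_pos_of_pos_left _ hP0
  have hds : d ∣ s := Nat.gcd_dvd_right _ _
  have hds' : d ∣ s' := hdd' ▸ Nat.gcd_dvd_right _ _
  set s₁ := s / d with hs₁
  set s₁' := s' / d with hs₁'
  have hs1 : s = d * s₁ := (Nat.mul_div_cancel' hds).symm
  have hs1' : s' = d * s₁' := (Nat.mul_div_cancel' hds').symm
  have hm0 : 0 < m := Nat.div_pos (Nat.le_of_dvd hP0 hdP) hd0
  have hcop : Nat.Coprime s₁ m := (Nat.coprime_div_gcd_div_gcd hd0).symm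
  have hcop' : Nat.Coprime s₁' m := by
    rw [hs₁', hm, hdd', hd']
    exact (Nat.coprime_div_gcd_div_gcd (Nat.gcd_pos_of_pos_left _ hP0)).symm
  have hmP : m ∣ P := Nat.div_dvd_of_dvd hdP
  have hPN : P ∣ Fintype.card F - 1 := ⟨Sk, by rw [← hcardN]; ring⟩
  have hmN : m ∣ Fintype.card F - 1 := hmP.trans hPN
  have hts : Nat.Coprime (s₁' * s₁ ^ (m.totient - 1)) m :=
    Nat.Coprime.mul hcop' (hcop.pow_left _)
  obtain ⟨t, ht0, htN, htm⟩ := lift_coprime hmN (by omega) hts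
  have htot : m.totient - 1 + 1 = m.totient := by
    have := Nat.totient_pos.mpr hm0
    omega
  have hkey : s₁ * t ≡ s₁' [MOD m] := by
    calc s₁ * t ≡ s₁ * (s₁' * s₁ ^ (m.totient - 1)) [MOD m] := Nat.ModEq.mul_left _ htm
      _ = s₁' * (s₁ ^ (m.totient - 1) * s₁) := by ring
      _ = s₁' * s₁ ^ (m.totient - 1 + 1) := by rw [pow_succ]
      _ = s₁' * s₁ ^ m.totient := by rw [htot]
      _ ≡ s₁' * 1 [MOD m] := Nat.ModEq.mul_left _ (Nat.ModEq.pow_totient hcop)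
      _ = s₁' := by ring
  have hkeyP : s * t ≡ s' [MOD P] := by
    have h1 : d * (s₁ * t) ≡ d * s₁' [MOD d * m] := hkey.mul_left' (c := d)
    have h2 : d * m = P := Nat.mul_div_cancel' hdP
    rw [h2, ← hs1'] at h1
    have h3 : d * (s₁ * t) = s * t := by rw [hs1]; ring
    rwa [h3] at h1
  have hnm : (a ^ t) ^ Sk = a' ^ Sk := by
    rw [show (a ^ t) ^ Sk = (a ^ Sk) ^ t by rw [← pow_mul, ← pow_mul, mul_comm],
      haδ, haδ', ← pow_mul]
    exact pow_eq_pow_iff_modEq.mpr (by rw [hδord]; exact hkeyP)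
  set w := a' * (a ^ t)⁻¹ with hw
  have hw1 : w ^ Sk = 1 := by
    rw [hw, mul_pow, inv_pow, ← hnm]
    simp
  obtain ⟨u, hu⟩ := exists_pow_of_norm_one hk hq w hw1
  have ha' : a' = a ^ t * u ^ (p - 1) := by
    rw [hu, hw, mul_comm a' ((a ^ t)⁻¹), mul_inv_cancel_left]
  have e1 : DynEquiv (fun x : F => ↑a * x ^ p) (fun x : F => ↑(a ^ t) * x ^ p) :=
    pow_equiv a t ht0 htN
  have e2 : DynEquiv (fun x : F => ↑(a ^ t * u ^ (p - 1)) * x ^ p)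
      (fun x : F => ↑(a ^ t) * x ^ p) := scale_equiv (a ^ t) u
  rw [← ha'] at e2
  exact dynEquiv_trans e1 (dynEquiv_symm e2)

lemma exists_unit_of_order (hk : 1 ≤ k) (hq : Fintype.card F = p ^ k) {m : ℕ}
    (hm : m ∣ p - 1) (hm0 : m ≠ 0) :
    ∃ a : Fˣ, orderOf (a ^ (∑ i ∈ range k, p ^ i)) = m := by
  classical
  have hp2 : 2 ≤ p := (Fact.out : p.Prime).two_le
  obtain ⟨γ, hγ⟩ := IsCyclic.exists_generator (α := Fˣ)
  set Sk := ∑ i ∈ range k, p ^ i with hSk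
  set P := p - 1 with hP
  have hP0 : 0 < P := by omega
  have hSpos := sum_pos_aux (p := p) (k := k) hk hp2
  have hcardN : Sk * P = Fintype.card F - 1 := exp_card_aux hk hp2 hq
  set δ := γ ^ Sk with hδ
  have hδord : orderOf δ = P := by
    rw [hδ, orderOf_pow, gen_order hk hq γ hγ, ← hq, ← hcardN]
    have hgcd : (Sk * P).gcd Sk = Sk := Nat.gcd_eq_right ⟨P, rfl⟩
    rw [hgcd, Nat.mul_div_cancel_left _ hSpos]
  refine ⟨γ ^ (P / m), ?_⟩
  rw [pow_sum_eq, ← hδ, orderOf_pow, hδord]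
  have hPm : P / m ∣ P := Nat.div_dvd_of_dvd hm
  rw [Nat.gcd_eq_right hPm]
  exact Nat.div_div_self hm (by omega)

end FieldPart
end Stmt13Aux

open Stmt13Aux in
theorem stmt13 {F : Type*} [Field F] [Fintype F] (p k : ℕ) [Fact p.Prime] (hk : 1 ≤ k)
    (hq : Fintype.card F = p ^ k) :
    numDynClasses {f : F → F | ∃ (a : Fˣ) (b : F), fieldNorm p k (a : F) ≠ 1 ∧
        f = fun x => (a : F) * x ^ p + b} = (p - 1).divisors.card - 1 := by
  classical
  have hp2 : 2 ≤ p := (Fact.out : p.Prime).two_le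
  set S : Set (F → F) := {f : F → F | ∃ (a : Fˣ) (b : F), fieldNorm p k (a : F) ≠ 1 ∧
      f = fun x => (a : F) * x ^ p + b} with hS
  set T : Finset ℕ := (p - 1).divisors.erase 1 with hT
  have hnormiff : ∀ a : Fˣ, fieldNorm p k (a : F) = 1 ↔ a ^ (∑ i ∈ Finset.range k, p ^ i) = 1 := by
    intro a
    rw [show fieldNorm p k (a : F) = (a : F) ^ (∑ i ∈ Finset.range k, p ^ i) from rfl,
      ← Units.val_pow_eq_pow_val, Units.val_eq_one]
  -- phi value on members of S
  have hphi : ∀ (a : Fˣ) (b : F), fieldNorm p k (a : F) ≠ 1 →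
      phi (fun x : F => ↑a * x ^ p + b)
        = k * orderOf (a ^ (∑ i ∈ Finset.range k, p ^ i)) := by
    intro a b hNm
    have hNm' : (a : F) ^ (∑ i ∈ Finset.range k, p ^ i) ≠ 1 := hNm
    rw [phi_eq_of_dynEquiv (affine_equiv hk hq a b hNm')]
    refine phi_eq_of_forall_dvd ?_ (iter_eq_id_iff hk hq a)
    exact Nat.mul_pos (by omega) (orderOf_pos _)
  have hmemT : ∀ a : Fˣ, fieldNorm p k (a : F) ≠ 1 →
      orderOf (a ^ (∑ i ∈ Finset.range k, p ^ i)) ∈ T := by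
    intro a hNm
    have h1 : orderOf (a ^ (∑ i ∈ Finset.range k, p ^ i)) ∣ p - 1 := nm_order_dvd hk hq a
    have h2 : orderOf (a ^ (∑ i ∈ Finset.range k, p ^ i)) ≠ 1 := by
      intro h
      exact hNm ((hnormiff a).mpr (orderOf_eq_one_iff.mp h))
    rw [hT, Finset.mem_erase]
    exact ⟨h2, Nat.mem_divisors.mpr ⟨h1, by omega⟩⟩
  have hrep : ∀ m ∈ T, ∃ a : Fˣ,
      orderOf (a ^ (∑ i ∈ Finset.range k, p ^ i)) = m ∧ fieldNorm p k (a : F) ≠ 1 := by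
    intro m hm
    rw [hT, Finset.mem_erase, Nat.mem_divisors] at hm
    have hm0 : m ≠ 0 := by
      intro h
      rw [h] at hm
      exact hm.2.2 (Nat.eq_zero_of_zero_dvd hm.2.1)
    obtain ⟨a, ha⟩ := exists_unit_of_order hk hq hm.2.1 hm0
    refine ⟨a, ha, ?_⟩
    intro hcon
    apply hm.1
    rw [← ha]
    exact orderOf_eq_one_iff.mpr ((hnormiff a).mp hcon)
  -- membership of phi/k in T for f ∈ S
  have hfk : ∀ f : S, phi (f : F → F) / k ∈ T := by
    rintro ⟨f, a, b, hNm, rfl⟩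
    rw [hphi a b hNm, Nat.mul_div_cancel_left _ (by omega : 0 < k)]
    exact hmemT a hNm
  have hfkval : ∀ (f : S) (a : Fˣ) (b : F), fieldNorm p k (a : F) ≠ 1 →
      (f : F → F) = (fun x => (a : F) * x ^ p + b) →
      phi (f : F → F) / k = orderOf (a ^ (∑ i ∈ Finset.range k, p ^ i)) := by
    intro f a b hNm hf
    rw [hf, hphi a b hNm, Nat.mul_div_cancel_left _ (by omega : 0 < k)]
  -- the equivalence between the quotient and T
  let R : S → S → Prop := fun f g => DynEquiv f.1 g.1
  let rep : {x // x ∈ T} → S := fun x =>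
    ⟨fun y : F => ((hrep x.1 x.2).choose : F) * y ^ p + 0,
      ⟨(hrep x.1 x.2).choose, 0, (hrep x.1 x.2).choose_spec.2, rfl⟩⟩
  have hrepphi : ∀ x : {x // x ∈ T}, phi (rep x : F → F) / k = x.1 := by
    intro x
    have hspec := (hrep x.1 x.2).choose_spec
    show phi (fun y : F => ((hrep x.1 x.2).choose : F) * y ^ p + 0) / k = x.1
    rw [hphi _ _ hspec.2, Nat.mul_div_cancel_left _ (by omega : 0 < k), hspec.1]
  let e : Quot R ≃ {x // x ∈ T} :=
    { toFun := Quot.lift (fun f : S => (⟨phi (f : F → F) / k, hfk f⟩ : {x // x ∈ T}))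
        (fun f g hfg => Subtype.ext (by
          show phi (f : F → F) / k = phi (g : F → F) / k
          rw [phi_eq_of_dynEquiv hfg]))
      invFun := fun x => Quot.mk R (rep x)
      left_inv := by
        refine Quot.ind (fun f => ?_)
        apply Quot.sound
        show DynEquiv ((rep _ : S) : F → F) (f : F → F)
        obtain ⟨g, a, b, hNm, hg⟩ := f
        set x : {x // x ∈ T} := ⟨phi (g : F → F) / k, hfk ⟨g, a, b, hNm, hg⟩⟩ with hx
        have hspec := (hrep x.1 x.2).choose_spec
        set a₀ : Fˣ := (hrep x.1 x.2).choose with ha₀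
        have hordeq : orderOf (a₀ ^ (∑ i ∈ Finset.range k, p ^ i))
            = orderOf (a ^ (∑ i ∈ Finset.range k, p ^ i)) := by
          rw [hspec.1]
          exact hfkval ⟨g, a, b, hNm, hg⟩ a b hNm hg
        have e1 : DynEquiv (fun y : F => (a₀ : F) * y ^ p + 0) (fun y : F => (a₀ : F) * y ^ p) :=
          affine_equiv hk hq a₀ 0 hspec.2
        have e2 : DynEquiv (fun y : F => (a₀ : F) * y ^ p) (fun y : F => (a : F) * y ^ p) :=
          equiv_of_order_eq hk hq a₀ a hordeq
        have e3 : DynEquiv (fun y : F => (a : F) * y ^ p + b) (fun y : F => (a : F) * y ^ p) :=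
          affine_equiv hk hq a b hNm
        have := dynEquiv_trans (dynEquiv_trans e1 e2) (dynEquiv_symm e3)
        rw [← hg] at this
        exact this
      right_inv := fun x => Subtype.ext (hrepphi x) }
  have hcardeq : numDynClasses S = T.card := by
    rw [numDynClasses]
    rw [Nat.card_congr e, Nat.card_eq_fintype_card, Fintype.card_coe]
  rw [hcardeq, hT, Finset.card_erase_of_mem (Nat.one_mem_divisors.mpr (by omega))]
end

section
/- Let q = p^k with p prime and k ≥ 1, let b ∈ F_q, and define f_b : F_q → F_q by f_b(x) = x^p + b. For any integer m ≥ 1, if there exists at least one x ∈ F_q with f_b^{(m)}(x) = x, then the set {x ∈ F_q : f_b^{(m)}(x) = x} has exactly p^{gcd(m,k)} elements. -/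
/-!
Since `(x + z) ^ p = x ^ p + z ^ p` in characteristic `p`, the map `f y = y ^ p + b` satisfies
`f^[m] (x₀ + z) = f^[m] x₀ + z ^ p ^ m`. So once `x₀` is a fixed point of `f^[m]`, the fixed
points of `f^[m]` are the translate by `x₀` of the fixed points of `Frob^m`. As `Frob^k = id` on
`F`, these are the fixed points of `Frob^(gcd m k)`, i.e. the roots of the separable polynomial
`X ^ p ^ gcd m k - X`, which divides `X ^ p ^ k - X` and hence splits in `F`.
-/

open Polynomial Function

theorem pow_pow_eq_self_iff_gcd {M : Type*} [Monoid M] {z : M} {p a b : ℕ}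
    (hb : z ^ p ^ b = z) : z ^ p ^ a = z ↔ z ^ p ^ Nat.gcd a b = z := by
  have periodic_iff (n : ℕ) : IsPeriodicPt (· ^ p) n z ↔ z ^ p ^ n = z := by
    rw [IsPeriodicPt, IsFixedPt, pow_iterate]
  simp only [← periodic_iff] at hb ⊢
  exact ⟨fun ha => ha.gcd hb, fun h => h.trans_dvd (Nat.gcd_dvd_left a b)⟩

theorem X_pow_succ_sub_X_dvd {R : Type*} [CommRing R] {a b : ℕ} (h : a ∣ b) :
    (X ^ (a + 1) - X : R[X]) ∣ X ^ (b + 1) - X := by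
  obtain ⟨c, rfl⟩ := h
  have := mul_dvd_mul_left X (by simpa [pow_mul] using sub_dvd_pow_sub_pow (X ^ a : R[X]) 1 c)
  simpa [pow_succ', mul_sub, pow_mul] using this

theorem X_pow_pow_sub_X_dvd {R : Type*} [CommRing R] {p a b : ℕ} (hp : p ≠ 0) (h : a ∣ b) :
    (X ^ p ^ a - X : R[X]) ∣ X ^ p ^ b - X := by
  have succ_pred (n : ℕ) : p ^ n = p ^ n - 1 + 1 :=
    (Nat.sub_add_cancel (Nat.one_le_pow _ _ (Nat.pos_of_ne_zero hp))).symm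
  rw [succ_pred a, succ_pred b]
  exact X_pow_succ_sub_X_dvd (Nat.pow_sub_one_dvd_pow_sub_one p h)

section AffineFrobenius

variable {R : Type*} (p : ℕ)

theorem iterate_pow_add_const_add [CommSemiring R] [ExpChar R p] (b x z : R) (n : ℕ) :
    (fun y : R => y ^ p + b)^[n] (x + z) = (fun y : R => y ^ p + b)^[n] x + z ^ p ^ n := by
  induction n with
  | zero => simp
  | succ n ih =>
    rw [iterate_succ_apply', iterate_succ_apply', ih, add_pow_expChar, ← pow_mul, ← pow_succ]
    ring

theorem setOf_iterate_pow_add_const_eq_self [CommRing R] [ExpChar R p] {b x₀ : R} {m : ℕ}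
    (hx₀ : (fun y : R => y ^ p + b)^[m] x₀ = x₀) :
    {x : R | (fun y : R => y ^ p + b)^[m] x = x} = (x₀ + ·) '' {z : R | z ^ p ^ m = z} := by
  ext x
  obtain ⟨z, rfl⟩ : ∃ z, x = x₀ + z := ⟨x - x₀, by ring⟩
  rw [(add_right_injective x₀).mem_set_image, Set.mem_ofPred, Set.mem_ofPred,
    iterate_pow_add_const_add, hx₀, add_right_inj]

end AffineFrobenius

section FiniteField

variable {F : Type*} [Field F] [Fintype F] {p k : ℕ}

theorem setOf_pow_prime_pow_eq_self_eq_gcd (hq : Fintype.card F = p ^ k) (m : ℕ) :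
    {z : F | z ^ p ^ m = z} = {z : F | z ^ p ^ Nat.gcd m k = z} := by
  ext z
  exact pow_pow_eq_self_iff_gcd (hq ▸ FiniteField.pow_card z)

theorem ne_zero_of_card_eq_pow (hq : Fintype.card F = p ^ k) : k ≠ 0 := by
  rintro rfl
  exact (Fintype.one_lt_card (α := F)).ne' (by simpa using hq)

theorem splits_X_pow_pow_sub_X [Fact p.Prime] (hq : Fintype.card F = p ^ k) {n : ℕ}
    (hn : n ∣ k) : Splits (X ^ p ^ n - X : F[X]) := by
  have hp := (Fact.out : p.Prime)
  refine (splits_X_pow_nat_card_sub_X (K := F)).of_dvd ?_ ?_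
  all_goals rw [Nat.card_eq_fintype_card, hq]
  · exact FiniteField.X_pow_card_pow_sub_X_ne_zero F (ne_zero_of_card_eq_pow hq) hp.one_lt
  · exact X_pow_pow_sub_X_dvd hp.ne_zero hn

theorem ncard_setOf_pow_prime_pow_eq_self [Fact p.Prime] (hq : Fintype.card F = p ^ k)
    {n : ℕ} (hn : n ∣ k) : {z : F | z ^ p ^ n = z}.ncard = p ^ n := by
  have := charP_of_card_eq_prime_pow hq
  have hp := (Fact.out : p.Prime)
  have hn0 : n ≠ 0 := ne_zero_of_dvd_ne_zero (ne_zero_of_card_eq_pow hq) hn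
  have hsep : (X ^ p ^ n - X : F[X]).Separable := galois_poly_separable p _ (dvd_pow_self p hn0)
  have hcard :=
    card_rootSet_eq_natDegree (K := F) hsep (by simpa using splits_X_pow_pow_sub_X hq hn)
  rw [FiniteField.X_pow_card_pow_sub_X_natDegree_eq F hn0 hp.one_lt] at hcard
  have hroots : {z : F | z ^ p ^ n = z} = (X ^ p ^ n - X : F[X]).rootSet F := by
    ext z
    simp [mem_rootSet, FiniteField.X_pow_card_pow_sub_X_ne_zero F hn0 hp.one_lt, sub_eq_zero]
  rw [hroots, Set.ncard_eq_toFinset_card', Set.toFinset_card, hcard]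

end FiniteField

theorem stmt18_general {F : Type*} [Field F] [Fintype F] (p k : ℕ) [Fact p.Prime]
    (hq : Fintype.card F = p ^ k) (b : F) (m : ℕ)
    (hex : ∃ x : F, (fun y : F => y ^ p + b)^[m] x = x) :
    {x : F | (fun y : F => y ^ p + b)^[m] x = x}.ncard = p ^ Nat.gcd m k := by
  have := charP_of_card_eq_prime_pow hq
  obtain ⟨x₀, hx₀⟩ := hex
  rw [setOf_iterate_pow_add_const_eq_self p hx₀,
    Set.ncard_image_of_injective _ (add_right_injective x₀),
    setOf_pow_prime_pow_eq_self_eq_gcd hq,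
    ncard_setOf_pow_prime_pow_eq_self hq (Nat.gcd_dvd_right m k)]

theorem stmt18 {F : Type*} [Field F] [Fintype F] (p k : ℕ) [Fact p.Prime] (hk : 1 ≤ k)
    (hq : Fintype.card F = p ^ k) (b : F) (m : ℕ) (hm : 1 ≤ m)
    (hex : ∃ x : F, (fun y : F => y ^ p + b)^[m] x = x) :
    {x : F | (fun y : F => y ^ p + b)^[m] x = x}.ncard = p ^ Nat.gcd m k :=
  stmt18_general p k hq b m hex
end
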